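/- arXiv:1101.1400 — 2 statements merged into one kernel-verified Lean document; each statement's English description precedes it below -/
import Mathlib

section
/- Every braid β ∈ B_n admits a unique decomposition β = β'⁻¹β'' with β', β'' ∈ B⁺_n such that the left gcd of β' and β'' is trivial, i.e., the only element of B⁺_n left dividing both β' and β'' is 1. -/
/-!
Positive braid words modulo the braid relations form a monoid in which, by Garside's key lemma,
`a u ≡ b v` holds only if `u ≡ v` (when `a = b`) or `u` and `v` start with the complements of `a`
and `b` in their least common multiple (when `a ≠ b`). The lemma is proved by induction on the
length; the only difficult case, where the first letter changes along a rewriting sequence, is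
settled by the "cube condition" on three letters. The lemma makes the monoid cancellative and
provides least common multiples of divisors of a common word; a common divisor of maximal length
is then a left gcd. The Garside element `Δ` is divisible by every generator and conjugation by it
permutes the generators, so every word divides a power of `Δ`. Hence the monoid satisfies the Ore
conditions and embeds into its group of fractions, which receives `B_n`: the positive braids of
`B_n` are the positive words up to the braid relations.

In any group generated by a submonoid `M` with trivial units, common left multiples and left
gcds, every element is a left fraction `x⁻¹ y` of elements of `M`, and dividing out `gcd(x, y)`
makes it coprime. If `a⁻¹ b = c⁻¹ d` are two coprime fractions and `e a = f c` is a common left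
multiple, then `e b = f d`, and coprimality forces both `e` and `f` to equal `gcd(e a, e b)`.
-/

namespace BraidWord

/-- Positive braid words; the letter `a` stands for the Artin generator `σ_{a+1}`. -/
abbrev Word := List ℕ

def Far (a b : ℕ) : Prop := a + 2 ≤ b ∨ b + 2 ≤ a

instance : DecidableRel Far := fun a b => inferInstanceAs (Decidable (a + 2 ≤ b ∨ b + 2 ≤ a))

def Adj (a b : ℕ) : Prop := b = a + 1 ∨ a = b + 1

section Letters

variable {a b c : ℕ}

theorem Far.symm (h : Far a b) : Far b a := h.elim Or.inr Or.inl

theorem Adj.symm (h : Adj a b) : Adj b a := h.elim Or.inr Or.inl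

theorem Far.ne (h : Far a b) : a ≠ b := by unfold Far at h; omega

theorem Adj.ne (h : Adj a b) : a ≠ b := by unfold Adj at h; omega

theorem Adj.not_far (h : Adj a b) : ¬Far a b := by unfold Adj at h; unfold Far; omega

theorem far_or_adj (h : a ≠ b) : Far a b ∨ Adj a b := by unfold Far Adj; omega

theorem far_of_adj_of_adj (hab : a ≠ b) (hca : Adj c a) (hcb : Adj c b) : Far a b := by
  unfold Adj at hca hcb; unfold Far; omega

end Letters

inductive BraidRel : Word → Word → Prop
  | comm {a b : ℕ} : Far a b → BraidRel [a, b] [b, a]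
  | braid {a b : ℕ} : Adj a b → BraidRel [a, b, a] [b, a, b]

theorem BraidRel.symm {u v : Word} : BraidRel u v → BraidRel v u
  | comm h => comm h.symm
  | braid h => braid h.symm

def Step (u v : Word) : Prop := ∃ x l r y, BraidRel l r ∧ u = x ++ l ++ y ∧ v = x ++ r ++ y

def Eqv : Word → Word → Prop := Relation.ReflTransGen Step

infix:50 " ≋ " => Eqv

section Rewriting

variable {u v w x y : Word}

theorem Step.symm (h : Step u v) : Step v u := by
  obtain ⟨x, l, r, y, hlr, rfl, rfl⟩ := h
  exact ⟨x, r, l, y, hlr.symm, rfl, rfl⟩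

theorem Step.append_left (c : Word) (h : Step u v) : Step (c ++ u) (c ++ v) := by
  obtain ⟨x, l, r, y, hlr, rfl, rfl⟩ := h
  exact ⟨c ++ x, l, r, y, hlr, by simp, by simp⟩

theorem Step.append_right (c : Word) (h : Step u v) : Step (u ++ c) (v ++ c) := by
  obtain ⟨x, l, r, y, hlr, rfl, rfl⟩ := h
  exact ⟨x, l, r, y ++ c, hlr, by simp, by simp⟩

theorem Step.reverse (h : Step u v) : Step u.reverse v.reverse := by
  obtain ⟨x, l, r, y, hlr, rfl, rfl⟩ := h
  refine ⟨y.reverse, l.reverse, r.reverse, x.reverse, ?_, by simp, by simp⟩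
  cases hlr with
  | comm h => exact .comm h.symm
  | braid h => exact .braid h

theorem Step.length_eq (h : Step u v) : u.length = v.length := by
  obtain ⟨x, l, r, y, hlr, rfl, rfl⟩ := h
  cases hlr <;> simp

theorem Step.mem_iff (h : Step u v) {a : ℕ} : a ∈ u ↔ a ∈ v := by
  obtain ⟨x, l, r, y, hlr, rfl, rfl⟩ := h
  cases hlr <;> simp <;> tauto

namespace Eqv

@[refl] theorem refl (u : Word) : u ≋ u := Relation.ReflTransGen.refl

theorem of_step (h : Step u v) : u ≋ v := Relation.ReflTransGen.single h

@[trans] theorem trans (h₁ : u ≋ v) (h₂ : v ≋ w) : u ≋ w :=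
  Relation.ReflTransGen.trans h₁ h₂

instance : Trans Eqv Eqv Eqv := ⟨trans⟩

theorem of_eq (h : u = v) : u ≋ v := h ▸ refl u

@[symm] theorem symm (h : u ≋ v) : v ≋ u := by
  induction h with
  | refl => rfl
  | tail _ hs ih => exact (of_step hs.symm).trans ih

theorem apply_eq {α : Type*} {f : Word → α} (hf : ∀ {u v}, Step u v → f u = f v)
    (h : u ≋ v) : f u = f v := by
  induction h with
  | refl => rfl
  | tail _ hs ih => exact ih.trans (hf hs)

theorem map {f : Word → Word} (hf : ∀ {u v}, Step u v → Step (f u) (f v)) (h : u ≋ v) :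
    f u ≋ f v :=
  Relation.ReflTransGen.lift f (fun _ _ hs => hf hs) _ _ h

theorem append_left (c : Word) (h : u ≋ v) : c ++ u ≋ c ++ v := map (Step.append_left c) h

theorem append_right (c : Word) (h : u ≋ v) : u ++ c ≋ v ++ c := map (Step.append_right c) h

theorem append (h₁ : u ≋ v) (h₂ : x ≋ y) : u ++ x ≋ v ++ y :=
  (h₁.append_right x).trans (h₂.append_left v)

theorem cons (a : ℕ) (h : u ≋ v) : a :: u ≋ a :: v := h.append_left [a]

theorem reverse (h : u ≋ v) : u.reverse ≋ v.reverse := map Step.reverse h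

theorem length_eq (h : u ≋ v) : u.length = v.length := apply_eq Step.length_eq h

theorem mem_iff (h : u ≋ v) {a : ℕ} : a ∈ u ↔ a ∈ v :=
  Iff.of_eq (apply_eq (f := (a ∈ ·)) (fun hs => propext hs.mem_iff) h)

theorem swap {a b : ℕ} (h : Far a b) (t : Word) : a :: b :: t ≋ b :: a :: t :=
  of_step ⟨[], [a, b], [b, a], t, .comm h, rfl, rfl⟩

theorem braid {a b : ℕ} (h : Adj a b) (t : Word) : a :: b :: a :: t ≋ b :: a :: b :: t :=
  of_step ⟨[], [a, b, a], [b, a, b], t, .braid h, rfl, rfl⟩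

end Eqv

end Rewriting

/-- `a :: complement a b ≋ b :: complement b a` is the least common multiple of two distinct
letters `a` and `b`. -/
def complement (a b : ℕ) : Word := if Far a b then [b] else [b, a]

theorem complement_of_far {a b : ℕ} (h : Far a b) : complement a b = [b] := if_pos h

theorem complement_of_adj {a b : ℕ} (h : Adj a b) : complement a b = [b, a] := if_neg h.not_far

theorem cons_complement_eqv {a b : ℕ} (h : a ≠ b) (t : Word) :
    a :: (complement a b ++ t) ≋ b :: (complement b a ++ t) := by
  rcases far_or_adj h with hf | ha
  · simpa [complement_of_far hf, complement_of_far hf.symm] using Eqv.swap hf t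
  · simpa [complement_of_adj ha, complement_of_adj ha.symm] using Eqv.braid ha t

/-- A rewriting step either keeps the first letter, or applies a relation at the very front. -/
theorem Step.cases_cons {a : ℕ} {u w : Word} (h : Step (a :: u) w) :
    (∃ u', w = a :: u' ∧ Step u u') ∨
      ∃ c t, a ≠ c ∧ u = complement a c ++ t ∧ w = c :: (complement c a ++ t) := by
  obtain ⟨x, l, r, y, hlr, hu, rfl⟩ := h
  cases x with
  | nil =>
    right
    cases hlr with
    | @comm b c hf =>
      simp only [List.nil_append, List.cons_append, List.cons.injEq] at hu
      obtain ⟨rfl, rfl⟩ := hu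
      exact ⟨c, y, hf.ne, by simp [complement_of_far hf], by simp [complement_of_far hf.symm]⟩
    | @braid b c ha =>
      simp only [List.nil_append, List.cons_append, List.cons.injEq] at hu
      obtain ⟨rfl, rfl⟩ := hu
      exact ⟨c, y, ha.ne, by simp [complement_of_adj ha], by simp [complement_of_adj ha.symm]⟩
  | cons b x =>
    left
    simp only [List.cons_append, List.cons.injEq] at hu
    obtain ⟨rfl, rfl⟩ := hu
    exact ⟨x ++ r ++ y, by simp, ⟨x, l, r, y, hlr, rfl, rfl⟩⟩

/-- Garside's key lemma for words `a :: u` of length at most `N`. -/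
def KeyProp (N : ℕ) : Prop :=
  ∀ a b : ℕ, ∀ u v : Word, u.length < N → a :: u ≋ b :: v →
    (a = b → u ≋ v) ∧ (a ≠ b → ∃ w, u ≋ complement a b ++ w ∧ v ≋ complement b a ++ w)

namespace KeyProp

variable {N : ℕ} {a b c : ℕ} {u v t s : Word}

theorem cancel_cons (K : KeyProp N) (h : a :: u ≋ a :: v) (hl : u.length < N) : u ≋ v :=
  (K a a u v hl h).1 rfl

theorem cancel_append (K : KeyProp N) {p : Word} (h : p ++ u ≋ p ++ v)
    (hl : (p ++ u).length ≤ N) : u ≋ v := by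
  induction p with
  | nil => simpa using h
  | cons a p ih =>
    simp only [List.cons_append, List.length_cons] at h hl
    exact ih (K.cancel_cons h (by omega)) (by omega)

theorem exists_of_ne (K : KeyProp N) (hab : a ≠ b) (h : a :: u ≋ b :: v) (hl : u.length < N) :
    ∃ w, u ≋ complement a b ++ w ∧ v ≋ complement b a ++ w :=
  (K a b u v hl h).2 hab

theorem exists_of_far (K : KeyProp N) (hab : Far a b) (h : a :: u ≋ b :: v) (hl : u.length < N) :
    ∃ w, u ≋ b :: w ∧ v ≋ a :: w := by
  simpa [complement_of_far hab, complement_of_far hab.symm] using K.exists_of_ne hab.ne h hl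

theorem exists_of_adj (K : KeyProp N) (hab : Adj a b) (h : a :: u ≋ b :: v) (hl : u.length < N) :
    ∃ w, u ≋ b :: a :: w ∧ v ≋ a :: b :: w := by
  simpa [complement_of_adj hab, complement_of_adj hab.symm] using K.exists_of_ne hab.ne h hl

theorem cube_far_far (K : KeyProp N) (hab : a ≠ b) (hca : Far c a) (hcb : Far c b)
    (hyp : a :: t ≋ b :: s) (hl : t.length < N) :
    ∃ w, c :: t ≋ complement a b ++ w ∧ c :: s ≋ complement b a ++ w := by
  rcases far_or_adj hab with hab | hab
  · obtain ⟨r, htr, hsr⟩ := K.exists_of_far hab hyp hl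
    refine ⟨c :: r, ?_, ?_⟩ <;>
      simp only [complement_of_far hab, complement_of_far hab.symm, List.singleton_append]
    · exact (htr.cons c).trans (Eqv.swap hcb r)
    · exact (hsr.cons c).trans (Eqv.swap hca r)
  · obtain ⟨r, htr, hsr⟩ := K.exists_of_adj hab hyp hl
    refine ⟨c :: r, ?_, ?_⟩ <;>
      simp only [complement_of_adj hab, complement_of_adj hab.symm, List.cons_append,
        List.nil_append]
    · calc c :: t ≋ c :: b :: a :: r := htr.cons c
        _ ≋ b :: c :: a :: r := Eqv.swap hcb _
        _ ≋ b :: a :: c :: r := (Eqv.swap hca r).cons b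
    · calc c :: s ≋ c :: a :: b :: r := hsr.cons c
        _ ≋ a :: c :: b :: r := Eqv.swap hca _
        _ ≋ a :: b :: c :: r := (Eqv.swap hcb r).cons a

theorem cube_far_adj (K : KeyProp N) (hab : a ≠ b) (hca : Far c a) (hcb : Adj c b)
    (hyp : a :: t ≋ b :: c :: s) (hl : t.length < N) :
    ∃ w, c :: t ≋ complement a b ++ w ∧ c :: b :: s ≋ complement b a ++ w := by
  have hts := hyp.length_eq
  simp only [List.length_cons] at hts
  rcases far_or_adj hab with hab | hab
  · obtain ⟨r, htr, hsr⟩ := K.exists_of_far hab hyp hl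
    obtain ⟨q, hsq, hrq⟩ := K.exists_of_far hca hsr (by omega)
    refine ⟨c :: b :: q, ?_, ?_⟩ <;>
      simp only [complement_of_far hab, complement_of_far hab.symm, List.singleton_append]
    · calc c :: t ≋ c :: b :: c :: q := (htr.trans (hrq.cons b)).cons c
        _ ≋ b :: c :: b :: q := Eqv.braid hcb q
    · calc c :: b :: s ≋ c :: b :: a :: q := (hsq.cons b).cons c
        _ ≋ c :: a :: b :: q := (Eqv.swap hab.symm q).cons c
        _ ≋ a :: c :: b :: q := Eqv.swap hca _
  · obtain ⟨r, htr, hsr⟩ := K.exists_of_adj hab hyp hl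
    obtain ⟨q, hsq, hrq⟩ := K.exists_of_far hca hsr (by omega)
    have hrt := htr.length_eq
    simp only [List.length_cons] at hrt
    obtain ⟨p, hrp, hqp⟩ := K.exists_of_adj hcb.symm hrq (by omega)
    refine ⟨c :: b :: a :: p, ?_, ?_⟩ <;>
      simp only [complement_of_adj hab, complement_of_adj hab.symm, List.cons_append,
        List.nil_append]
    · calc c :: t ≋ c :: b :: a :: c :: b :: p := (htr.trans ((hrp.cons a).cons b)).cons c
        _ ≋ c :: b :: c :: a :: b :: p := ((Eqv.swap hca.symm _).cons b).cons c
        _ ≋ b :: c :: b :: a :: b :: p := Eqv.braid hcb _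
        _ ≋ b :: c :: a :: b :: a :: p := ((Eqv.braid hab.symm p).cons c).cons b
        _ ≋ b :: a :: c :: b :: a :: p := (Eqv.swap hca _).cons b
    · calc c :: b :: s ≋ c :: b :: a :: b :: c :: p := ((hsq.trans (hqp.cons a)).cons b).cons c
        _ ≋ c :: a :: b :: a :: c :: p := (Eqv.braid hab.symm _).cons c
        _ ≋ a :: c :: b :: a :: c :: p := Eqv.swap hca _
        _ ≋ a :: c :: b :: c :: a :: p := (((Eqv.swap hca.symm p).cons b).cons c).cons a
        _ ≋ a :: b :: c :: b :: a :: p := (Eqv.braid hcb _).cons a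

theorem cube_adj_adj (K : KeyProp N) (hab : Far a b) (hca : Adj c a) (hcb : Adj c b)
    (hyp : a :: c :: t ≋ b :: c :: s) (hl : t.length + 1 < N) :
    ∃ w, c :: a :: t ≋ b :: w ∧ c :: b :: s ≋ a :: w := by
  have hts := hyp.length_eq
  simp only [List.length_cons] at hts
  obtain ⟨r, htr, hsr⟩ := K.exists_of_far hab hyp (by simpa using hl)
  obtain ⟨q, htq, hrq⟩ := K.exists_of_adj hcb htr (by omega)
  obtain ⟨p, hsp, hrp⟩ := K.exists_of_adj hca hsr (by omega)
  have hqt := htq.length_eq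
  simp only [List.length_cons] at hqt
  have hbq : b :: q ≋ a :: p := K.cancel_cons (hrq.symm.trans hrp) (by simp; omega)
  obtain ⟨e, hqe, hpe⟩ := K.exists_of_far hab.symm hbq (by omega)
  refine ⟨c :: b :: a :: c :: e, ?_, ?_⟩
  · calc c :: a :: t ≋ c :: a :: b :: c :: a :: e :=
          ((htq.trans ((hqe.cons c).cons b)).cons a).cons c
      _ ≋ c :: b :: a :: c :: a :: e := (Eqv.swap hab _).cons c
      _ ≋ c :: b :: c :: a :: c :: e := ((Eqv.braid hca.symm e).cons b).cons c
      _ ≋ b :: c :: b :: a :: c :: e := Eqv.braid hcb _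
  · calc c :: b :: s ≋ c :: b :: a :: c :: b :: e :=
          ((hsp.trans ((hpe.cons c).cons a)).cons b).cons c
      _ ≋ c :: a :: b :: c :: b :: e := (Eqv.swap hab.symm _).cons c
      _ ≋ c :: a :: c :: b :: c :: e := ((Eqv.braid hcb.symm e).cons a).cons c
      _ ≋ a :: c :: a :: b :: c :: e := Eqv.braid hca _
      _ ≋ a :: c :: b :: a :: c :: e := ((Eqv.swap hab _).cons c).cons a

theorem cube (K : KeyProp N) (hab : a ≠ b) (hac : a ≠ c) (hbc : b ≠ c)
    (hyp : complement c a ++ t ≋ complement c b ++ s) (hl : (complement c a ++ t).length ≤ N) :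
    ∃ w, complement a c ++ t ≋ complement a b ++ w ∧
      complement b c ++ s ≋ complement b a ++ w := by
  rcases far_or_adj hac.symm with hca | hca <;> rcases far_or_adj hbc.symm with hcb | hcb
  · simp only [complement_of_far hca, complement_of_far hcb, complement_of_far hca.symm,
      complement_of_far hcb.symm, List.singleton_append, List.length_cons] at hyp hl ⊢
    exact K.cube_far_far hab hca hcb hyp (by omega)
  · simp only [complement_of_far hca, complement_of_adj hcb, complement_of_far hca.symm,
      complement_of_adj hcb.symm, List.cons_append, List.nil_append, List.length_cons] at hyp hl ⊢
    exact K.cube_far_adj hab hca hcb hyp (by omega)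
  · simp only [complement_of_adj hca, complement_of_far hcb, complement_of_adj hca.symm,
      complement_of_far hcb.symm, List.cons_append, List.nil_append, List.length_cons] at hyp hl ⊢
    have hts := hyp.length_eq
    simp only [List.length_cons] at hts
    obtain ⟨w, h₁, h₂⟩ := K.cube_far_adj hab.symm hcb hca hyp.symm (by omega)
    exact ⟨w, h₂, h₁⟩
  · have hab := far_of_adj_of_adj hab hca hcb
    simp only [complement_of_adj hca, complement_of_adj hcb, complement_of_adj hca.symm,
      complement_of_adj hcb.symm, complement_of_far hab, complement_of_far hab.symm,
      List.cons_append, List.nil_append, List.length_cons] at hyp hl ⊢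
    exact K.cube_adj_adj hab hca hcb hyp (by omega)

end KeyProp

/-- Garside's key lemma, by induction on the length and, inside, on the rewriting sequence: when
the first letter changes along the sequence, the cube condition closes the diagram. -/
theorem keyProp (N : ℕ) : KeyProp N := by
  induction N using Nat.strong_induction_on with
  | _ N IH =>
  intro a b u v hlen h
  generalize hx : a :: u = x at h
  induction h using Relation.ReflTransGen.head_induction_on generalizing a u with
  | refl =>
    obtain ⟨rfl, rfl⟩ := List.cons.inj hx
    exact ⟨fun _ => Eqv.refl _, fun hne => absurd rfl hne⟩
  | head hstep _ ih =>
    subst hx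
    have K := IH u.length hlen
    have hlen' := hstep.length_eq
    rcases hstep.cases_cons with ⟨u', rfl, hu⟩ | ⟨c, t, hac, rfl, rfl⟩
    · obtain ⟨h₁, h₂⟩ := ih a u' (by simp at hlen'; omega) rfl
      refine ⟨fun hab => (Eqv.of_step hu).trans (h₁ hab), fun hab => ?_⟩
      obtain ⟨w, hw₁, hw₂⟩ := h₂ hab
      exact ⟨w, (Eqv.of_step hu).trans hw₁, hw₂⟩
    · simp only [List.length_cons, List.length_append, add_left_inj] at hlen'
      obtain ⟨h₁, h₂⟩ := ih c (complement c a ++ t) (by simpa [← hlen'] using hlen) rfl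
      have hl : (complement c a ++ t).length ≤ (complement a c ++ t).length := by simp [hlen']
      constructor
      · rintro rfl
        obtain ⟨s, hts, hs⟩ := h₂ hac.symm
        exact ((K.cancel_append hts hl).append_left _).trans hs.symm
      · intro hab
        by_cases hcb : c = b
        · subst hcb
          exact ⟨t, Eqv.refl _, (h₁ rfl).symm⟩
        · obtain ⟨s, hts, hs⟩ := h₂ hcb
          obtain ⟨w, hw₁, hw₂⟩ := K.cube hab hac (Ne.symm hcb) hts hl
          exact ⟨w, hw₁, hs.trans hw₂⟩

theorem Eqv.cancel_left {p u v : Word} (h : p ++ u ≋ p ++ v) : u ≋ v :=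
  (keyProp _).cancel_append h le_rfl

theorem Eqv.cancel_right {p u v : Word} (h : u ++ p ≋ v ++ p) : u ≋ v := by
  have h' : p.reverse ++ u.reverse ≋ p.reverse ++ v.reverse := by simpa using h.reverse
  simpa using h'.cancel_left.reverse

theorem Eqv.exists_of_cons_eqv_cons {a b : ℕ} {u v : Word} (hab : a ≠ b) (h : a :: u ≋ b :: v) :
    ∃ w, u ≋ complement a b ++ w ∧ v ≋ complement b a ++ w :=
  (keyProp _).exists_of_ne hab h (Nat.lt_succ_self _)

def LDvd (g c : Word) : Prop := ∃ w, c ≋ g ++ w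

namespace LDvd

variable {a : ℕ} {g c d u v : Word}

@[refl] theorem refl (u : Word) : LDvd u u := ⟨[], by simp [Eqv.refl]⟩

theorem nil_left (u : Word) : LDvd [] u := ⟨u, Eqv.refl u⟩

theorem append_right (u w : Word) : LDvd u (u ++ w) := ⟨w, Eqv.refl _⟩

theorem of_eqv (h : u ≋ v) : LDvd u v := ⟨[], by simpa using h.symm⟩

@[trans] theorem trans (h₁ : LDvd g c) (h₂ : LDvd c d) : LDvd g d := by
  obtain ⟨w, hw⟩ := h₁
  obtain ⟨e, he⟩ := h₂
  exact ⟨w ++ e, he.trans (by simpa using hw.append_right e)⟩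

theorem cons (a : ℕ) (h : LDvd u v) : LDvd (a :: u) (a :: v) := by
  obtain ⟨w, hw⟩ := h
  exact ⟨w, hw.cons a⟩

theorem of_cons (h : LDvd (a :: u) (a :: v)) : LDvd u v := by
  obtain ⟨w, hw⟩ := h
  exact ⟨w, Eqv.cancel_left (p := [a]) hw⟩

theorem length_le (h : LDvd u v) : u.length ≤ v.length := by
  obtain ⟨w, hw⟩ := h
  simp [hw.length_eq]

theorem eqv_of_length_le (h : LDvd u v) (hl : v.length ≤ u.length) : v ≋ u := by
  obtain ⟨w, hw⟩ := h
  have : w = [] := List.eq_nil_of_length_eq_zero (by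
    have := hw.length_eq; simp at this; omega)
  simpa [this] using hw

end LDvd

def IsLCM (m g h : Word) : Prop := LDvd g m ∧ LDvd h m ∧ ∀ d, LDvd g d → LDvd h d → LDvd m d

theorem exists_isLCM_singleton {c : Word}
    (IH : ∀ c' : Word, c'.length < c.length → ∀ g h, LDvd g c' → LDvd h c' →
      ∃ m, LDvd m c' ∧ IsLCM m g h)
    {a : ℕ} {h : Word} (ha : LDvd [a] c) (hh : LDvd h c) : ∃ m, LDvd m c ∧ IsLCM m [a] h := by
  cases h with
  | nil => exact ⟨[a], ha, .refl _, .nil_left _, fun _ hd _ => hd⟩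
  | cons b h =>
    by_cases hab : a = b
    · subst hab
      exact ⟨a :: h, hh, .cons a (.nil_left h), .refl _, fun _ _ hd => hd⟩
    obtain ⟨c₂, hc₂⟩ := ha
    obtain ⟨w₁, hw₁⟩ := hh
    obtain ⟨w, -, hw⟩ := Eqv.exists_of_cons_eqv_cons hab (hc₂.symm.trans hw₁)
    have hlen := hw₁.length_eq
    simp only [List.cons_append, List.length_cons] at hlen
    obtain ⟨m, ⟨e, he⟩, hm, hhm, hmin⟩ :=
      IH (h ++ w₁) (by omega) (complement b a) h ⟨w, hw⟩ (.append_right h w₁)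
    refine ⟨b :: m, ⟨e, hw₁.trans (he.cons b)⟩, ?_, hhm.cons b, ?_⟩
    · obtain ⟨w', hw'⟩ := hm
      exact ⟨complement a b ++ w', (hw'.cons b).trans (cons_complement_eqv hab w').symm⟩
    · rintro d ⟨d₂, hd₂⟩ ⟨e₁, he₁⟩
      obtain ⟨w₂, -, hw₂⟩ := Eqv.exists_of_cons_eqv_cons hab (hd₂.symm.trans he₁)
      exact ((hmin _ ⟨w₂, hw₂⟩ (.append_right h e₁)).cons b).trans (.of_eqv he₁.symm)

theorem exists_isLCM_of_ldvd {c g h : Word} (hg : LDvd g c) (hh : LDvd h c) :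
    ∃ m, LDvd m c ∧ IsLCM m g h := by
  induction hN : c.length using Nat.strong_induction_on generalizing c g h with
  | _ N IH =>
  have IH' : ∀ c' : Word, c'.length < c.length → ∀ g h, LDvd g c' → LDvd h c' →
      ∃ m, LDvd m c' ∧ IsLCM m g h := fun c' hc' g h hg hh => IH _ (hN ▸ hc') hg hh rfl
  cases g with
  | nil => exact ⟨h, hh, .nil_left h, .refl h, fun _ _ hd => hd⟩
  | cons a g =>
    obtain ⟨w₀, hw₀⟩ := hg
    obtain ⟨m₁, ⟨e, he⟩, ⟨k, hk⟩, hhm₁, hmin₁⟩ :=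
      exists_isLCM_singleton IH' ⟨g ++ w₀, hw₀⟩ hh
    have hkc : LDvd k (g ++ w₀) := LDvd.of_cons
      ⟨e, hw₀.symm.trans (he.trans (by simpa using hk.append_right e))⟩
    have hlen := hw₀.length_eq
    simp only [List.cons_append, List.length_cons] at hlen
    obtain ⟨m₂, hm₂c, hgm₂, hkm₂, hmin₂⟩ :=
      IH' (g ++ w₀) (by omega) g k (.append_right g w₀) hkc
    refine ⟨a :: m₂, .trans (hm₂c.cons a) (.of_eqv hw₀.symm), hgm₂.cons a,
      hhm₁.trans ((LDvd.of_eqv hk).trans (hkm₂.cons a)), ?_⟩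
    rintro d ⟨f, hf⟩ hhd
    have hdk : LDvd (a :: k) d := (LDvd.of_eqv hk.symm).trans (hmin₁ d ⟨g ++ f, hf⟩ hhd)
    have hkgf : LDvd k (g ++ f) := LDvd.of_cons (hdk.trans (.of_eqv hf))
    exact ((hmin₂ _ (.append_right g f) hkgf).cons a).trans (.of_eqv hf.symm)

/-- A common divisor of maximal length is a greatest common divisor, since its lcm with any other
common divisor is again a common divisor. -/
theorem exists_gcd (u v : Word) :
    ∃ g, LDvd g u ∧ LDvd g v ∧ ∀ h, LDvd h u → LDvd h v → LDvd h g := by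
  set S := {l | ∃ h, LDvd h u ∧ LDvd h v ∧ h.length = l}
  have hS : S.Nonempty := ⟨0, [], .nil_left u, .nil_left v, rfl⟩
  have hSbdd : BddAbove S := ⟨u.length, by rintro l ⟨h, hu, -, rfl⟩; exact hu.length_le⟩
  obtain ⟨g, hgu, hgv, hg⟩ := Nat.sSup_mem hS hSbdd
  refine ⟨g, hgu, hgv, fun h hu hv => ?_⟩
  obtain ⟨m, hmu, hgm, hhm, hmin⟩ := exists_isLCM_of_ldvd hgu hu
  have hmg : m.length ≤ g.length := hg ▸ le_csSup hSbdd ⟨m, hmu, hmin v hgv hv, rfl⟩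
  exact hhm.trans (.of_eqv (hgm.eqv_of_length_le hmg))

def Bounded (k : ℕ) (u : Word) : Prop := ∀ a ∈ u, a < k

theorem Bounded.of_eqv {k : ℕ} {u v : Word} (hu : Bounded k u) (h : u ≋ v) : Bounded k v :=
  fun a ha => hu a (h.mem_iff.2 ha)

theorem Bounded.append {k : ℕ} {u v : Word} (hu : Bounded k u) (hv : Bounded k v) :
    Bounded k (u ++ v) := by
  intro a ha
  rcases List.mem_append.1 ha with ha | ha
  exacts [hu a ha, hv a ha]

theorem Bounded.of_ldvd {k : ℕ} {u v : Word} (hv : Bounded k v) (h : LDvd u v) : Bounded k u := by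
  obtain ⟨w, hw⟩ := h
  exact fun a ha => hv.of_eqv hw a (List.mem_append_left w ha)

/-- The Garside element `Δ = (σ_1 ⋯ σ_k)(σ_1 ⋯ σ_{k-1}) ⋯ σ_1` on the letters `0, …, k-1`. -/
def garside : ℕ → Word
  | 0 => []
  | k + 1 => List.range (k + 1) ++ garside k

theorem garside_bounded (k : ℕ) : Bounded k (garside k) := by
  induction k with
  | zero => simp [garside, Bounded]
  | succ k ih =>
    intro a ha
    rcases List.mem_append.1 ha with ha | ha
    · simpa using ha
    · exact (ih a ha).trans (Nat.lt_succ_self k)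

theorem cons_eqv_append_singleton {a : ℕ} {u : Word} (h : ∀ c ∈ u, Far a c) :
    a :: u ≋ u ++ [a] := by
  induction u with
  | nil => rfl
  | cons c u ih =>
    exact (Eqv.swap (h c (by simp)) u).trans ((ih fun d hd => h d (by simp [hd])).cons c)

theorem succ_cons_range_eqv {a k : ℕ} (h : a + 2 ≤ k) :
    (a + 1) :: List.range k ≋ List.range k ++ [a] := by
  induction k with
  | zero => omega
  | succ k ih =>
    rw [List.range_succ]
    by_cases hak : a + 2 ≤ k
    · calc (a + 1) :: (List.range k ++ [k]) ≋ List.range k ++ [a] ++ [k] :=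
            (ih hak).append_right _
        _ ≋ List.range k ++ [k] ++ [a] := by
            simpa using (Eqv.swap (.inl (by omega)) []).append_left _
    · obtain rfl : k = a + 1 := by omega
      have hfar : ∀ c ∈ List.range a, Far (a + 1) c := fun c hc => .inr (by simp at hc; omega)
      calc (a + 1) :: (List.range (a + 1) ++ [a + 1])
          ≋ List.range a ++ [a + 1] ++ [a, a + 1] := by
            simpa [List.range_succ] using (cons_eqv_append_singleton hfar).append_right [a, a + 1]
        _ ≋ List.range a ++ [a, a + 1, a] := by
            simpa using (Eqv.braid (.inr rfl) []).append_left (List.range a)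
        _ = List.range (a + 1) ++ [a + 1] ++ [a] := by simp [List.range_succ]

theorem singleton_ldvd_garside {a k : ℕ} (h : a < k) : LDvd [a] (garside k) := by
  induction k generalizing a with
  | zero => omega
  | succ k ih =>
    cases a with
    | zero => exact ⟨List.map Nat.succ (List.range k) ++ garside k, .of_eq (by
        simp [garside, List.range_succ_eq_map])⟩
    | succ a =>
      obtain ⟨w, hw⟩ := ih (a := a) (by omega)
      refine ⟨List.range (k + 1) ++ w, ?_⟩
      calc garside (k + 1) ≋ List.range (k + 1) ++ ([a] ++ w) := hw.append_left _
        _ ≋ (a + 1) :: List.range (k + 1) ++ w := by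
          simpa using ((succ_cons_range_eqv (by omega)).symm).append_right w

theorem garside_succ_eqv (k : ℕ) : garside (k + 1) ≋ garside k ++ (List.range (k + 1)).reverse := by
  induction k with
  | zero => rfl
  | succ k ih =>
    have hfar : ∀ c ∈ garside k, Far (k + 1) c := fun c hc => .inr (by
      have := garside_bounded k c hc; omega)
    calc garside (k + 2) = List.range (k + 2) ++ garside (k + 1) := rfl
      _ ≋ List.range (k + 2) ++ (garside k ++ (List.range (k + 1)).reverse) := ih.append_left _
      _ = List.range (k + 1) ++ ((k + 1) :: garside k ++ (List.range (k + 1)).reverse) := by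
          simp [List.range_succ]
      _ ≋ List.range (k + 1) ++ (garside k ++ [k + 1] ++ (List.range (k + 1)).reverse) :=
          ((cons_eqv_append_singleton hfar).append_right _).append_left _
      _ = garside (k + 1) ++ (List.range (k + 2)).reverse := by simp [garside, List.range_succ]

theorem reverse_garside_eqv (k : ℕ) : (garside k).reverse ≋ garside k := by
  induction k with
  | zero => rfl
  | succ k ih =>
    calc (garside (k + 1)).reverse = (garside k).reverse ++ (List.range (k + 1)).reverse := by
          simp [garside]
      _ ≋ garside k ++ (List.range (k + 1)).reverse := ih.append_right _
      _ ≋ garside (k + 1) := (garside_succ_eqv k).symm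

/-- The letter `0`, not covered by `succ_cons_range_eqv`, is handled by the anti-automorphism
`reverse`, which fixes `Δ`. -/
theorem singleton_append_garside_eqv {a k : ℕ} (h : a < k) :
    [a] ++ garside k ≋ garside k ++ [k - 1 - a] := by
  induction k generalizing a with
  | zero => omega
  | succ k ih =>
    have hpos (b : ℕ) (hb : b + 1 < k + 1) :
        [b + 1] ++ garside (k + 1) ≋ garside (k + 1) ++ [k - (b + 1)] :=
      calc [b + 1] ++ garside (k + 1) = (b + 1) :: List.range (k + 1) ++ garside k := rfl
        _ ≋ List.range (k + 1) ++ [b] ++ garside k :=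
            (succ_cons_range_eqv (by omega)).append_right _
        _ = List.range (k + 1) ++ ([b] ++ garside k) := by simp
        _ ≋ List.range (k + 1) ++ (garside k ++ [k - 1 - b]) := (ih (by omega)).append_left _
        _ = garside (k + 1) ++ [k - (b + 1)] := by
            simp [garside, show k - 1 - b = k - (b + 1) by omega]
    cases a with
    | succ b => simpa using hpos b h
    | zero =>
      cases k with
      | zero => rfl
      | succ k =>
        have hrev := (hpos k (by omega)).reverse
        simp only [List.reverse_append, List.reverse_cons, List.reverse_nil, List.nil_append,
          Nat.sub_self] at hrev
        calc [0] ++ garside (k + 2) ≋ [0] ++ (garside (k + 2)).reverse :=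
              (reverse_garside_eqv _).symm.append_left _
          _ ≋ (garside (k + 2)).reverse ++ [k + 1] := hrev.symm
          _ ≋ garside (k + 2) ++ [k + 1 + 1 - 1 - 0] := (reverse_garside_eqv _).append_right _

theorem append_garside_eqv {k : ℕ} {u : Word} (hu : Bounded k u) :
    u ++ garside k ≋ garside k ++ u.map (k - 1 - ·) := by
  induction u with
  | nil => simp [Eqv.refl]
  | cons a u ih =>
    have ih := ih fun c hc => hu c (by simp [hc])
    calc a :: u ++ garside k = [a] ++ (u ++ garside k) := rfl
      _ ≋ [a] ++ (garside k ++ u.map (k - 1 - ·)) := ih.append_left _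
      _ = [a] ++ garside k ++ u.map (k - 1 - ·) := by simp
      _ ≋ garside k ++ [k - 1 - a] ++ u.map (k - 1 - ·) :=
          (singleton_append_garside_eqv (hu a (by simp))).append_right _
      _ = garside k ++ (a :: u).map (k - 1 - ·) := by simp

def garsidePow (k j : ℕ) : Word := (List.replicate j (garside k)).flatten

theorem garsidePow_succ (k j : ℕ) : garsidePow k (j + 1) = garside k ++ garsidePow k j := by
  simp [garsidePow, List.replicate_succ]

theorem garsidePow_add (k i j : ℕ) : garsidePow k (i + j) = garsidePow k i ++ garsidePow k j := by
  simp only [garsidePow, List.replicate_add, List.flatten_append]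

theorem garsidePow_bounded (k j : ℕ) : Bounded k (garsidePow k j) := by
  intro a ha
  simp only [garsidePow, List.mem_flatten, List.mem_replicate] at ha
  obtain ⟨_, ⟨-, rfl⟩, ha⟩ := ha
  exact garside_bounded k a ha

theorem exists_append_garsidePow_eqv {k : ℕ} {u : Word} (hu : Bounded k u) (j : ℕ) :
    ∃ u', Bounded k u' ∧ u ++ garsidePow k j ≋ garsidePow k j ++ u' := by
  induction j generalizing u with
  | zero => exact ⟨u, hu, by simp [garsidePow, Eqv.refl]⟩
  | succ j ih =>
    have hflip : Bounded k (u.map (k - 1 - ·)) := by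
      intro a ha
      obtain ⟨b, hb, rfl⟩ := List.mem_map.1 ha
      have := hu b hb
      omega
    obtain ⟨u', hu', h⟩ := ih hflip
    refine ⟨u', hu', ?_⟩
    calc u ++ garsidePow k (j + 1) = u ++ garside k ++ garsidePow k j := by simp [garsidePow_succ]
      _ ≋ garside k ++ u.map (k - 1 - ·) ++ garsidePow k j := (append_garside_eqv hu).append_right _
      _ = garside k ++ (u.map (k - 1 - ·) ++ garsidePow k j) := by simp
      _ ≋ garside k ++ (garsidePow k j ++ u') := h.append_left _
      _ = garsidePow k (j + 1) ++ u' := by simp [garsidePow_succ]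

theorem ldvd_garsidePow {k : ℕ} {u : Word} (hu : Bounded k u) : LDvd u (garsidePow k u.length) := by
  induction u with
  | nil => exact .nil_left _
  | cons a u ih =>
    obtain ⟨w, hw⟩ := singleton_ldvd_garside (hu a (by simp))
    obtain ⟨e, he⟩ := ih fun c hc => hu c (by simp [hc])
    obtain ⟨w', -, hw'⟩ := exists_append_garsidePow_eqv (u := w)
      (fun c hc => (garside_bounded k).of_eqv hw c (by simp [hc])) u.length
    refine ⟨e ++ w', ?_⟩
    calc garsidePow k (u.length + 1) = garside k ++ garsidePow k u.length := garsidePow_succ _ _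
      _ ≋ [a] ++ w ++ garsidePow k u.length := hw.append_right _
      _ = [a] ++ (w ++ garsidePow k u.length) := by simp
      _ ≋ [a] ++ (garsidePow k u.length ++ w') := hw'.append_left _
      _ ≋ [a] ++ (u ++ e ++ w') := (he.append_right w').append_left _
      _ = a :: u ++ (e ++ w') := by simp

theorem exists_common_right_multiple {k : ℕ} {u v : Word} (hu : Bounded k u) (hv : Bounded k v) :
    ∃ c, Bounded k c ∧ LDvd u c ∧ LDvd v c := by
  have ldvd_of_le {w : Word} (hw : Bounded k w) {j : ℕ} (hj : w.length ≤ j) :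
      LDvd w (garsidePow k j) := by
    obtain ⟨i, rfl⟩ := Nat.exists_eq_add_of_le hj
    rw [garsidePow_add]
    exact (ldvd_garsidePow hw).trans (.append_right _ _)
  exact ⟨_, garsidePow_bounded k (max u.length v.length), ldvd_of_le hu (le_max_left _ _),
    ldvd_of_le hv (le_max_right _ _)⟩

theorem exists_common_left_multiple {k : ℕ} {u v : Word} (hu : Bounded k u) (hv : Bounded k v) :
    ∃ x y, Bounded k x ∧ Bounded k y ∧ x ++ u ≋ y ++ v := by
  have bounded_reverse {w : Word} (hw : Bounded k w) : Bounded k w.reverse :=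
    fun a ha => hw a (List.mem_reverse.1 ha)
  obtain ⟨c, hc, ⟨x, hx⟩, ⟨y, hy⟩⟩ :=
    exists_common_right_multiple (bounded_reverse hu) (bounded_reverse hv)
  refine ⟨x.reverse, y.reverse, bounded_reverse ?_, bounded_reverse ?_, ?_⟩
  · exact fun a ha => hc.of_eqv hx a (List.mem_append_right _ ha)
  · exact fun a ha => hc.of_eqv hy a (List.mem_append_right _ ha)
  · simpa using hx.reverse.symm.trans hy.reverse

def eqvSetoid : Setoid Word := ⟨Eqv, ⟨Eqv.refl, Eqv.symm, Eqv.trans⟩⟩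

def PosBraidMonoid : Type := Quotient eqvSetoid

namespace PosBraidMonoid

def mk (u : Word) : PosBraidMonoid := Quotient.mk eqvSetoid u

instance : Monoid PosBraidMonoid where
  mul := Quotient.map₂ (· ++ ·) fun _ _ h₁ _ _ h₂ => Eqv.append h₁ h₂
  one := mk []
  mul_assoc := by
    rintro ⟨u⟩ ⟨v⟩ ⟨w⟩
    exact congrArg mk (List.append_assoc u v w)
  one_mul := by
    rintro ⟨u⟩
    rfl
  mul_one := by
    rintro ⟨u⟩
    exact congrArg mk (List.append_nil u)

theorem mk_mul (u v : Word) : mk u * mk v = mk (u ++ v) := rfl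

theorem mk_eq_mk_iff {u v : Word} : mk u = mk v ↔ u ≋ v := Quotient.eq

instance : IsCancelMul PosBraidMonoid where
  mul_left_cancel := by
    rintro ⟨u⟩ ⟨v⟩ ⟨w⟩ h
    exact mk_eq_mk_iff.2 (Eqv.cancel_left (mk_eq_mk_iff.1 h))
  mul_right_cancel := by
    rintro ⟨u⟩ ⟨v⟩ ⟨w⟩ h
    exact mk_eq_mk_iff.2 (Eqv.cancel_right (mk_eq_mk_iff.1 h))

theorem exists_mul_eq_mul (x y : PosBraidMonoid) : ∃ p : PosBraidMonoid × PosBraidMonoid,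
    p.1 * x = p.2 * y := by
  induction x using Quotient.ind with | _ u =>
  induction y using Quotient.ind with | _ v =>
  have bounded {w : Word} (hw : w = u ∨ w = v) : Bounded (u.sum + v.sum + 1) w := by
    rcases hw with rfl | rfl <;> intro a ha <;> have := List.le_sum_of_mem ha <;> omega
  obtain ⟨x, y, -, -, h⟩ := exists_common_left_multiple (bounded (.inl rfl)) (bounded (.inr rfl))
  exact ⟨(mk x, mk y), mk_eq_mk_iff.2 h⟩

noncomputable instance : OreLocalization.OreSet (⊤ : Submonoid PosBraidMonoid) where
  ore_right_cancel _ _ _ h := ⟨1, by simpa using mul_right_cancel h⟩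
  oreNum x s := (exists_mul_eq_mul x s).choose.2
  oreDenom x s := ⟨(exists_mul_eq_mul x s).choose.1, trivial⟩
  ore_eq x s := (exists_mul_eq_mul x s).choose_spec

abbrev Frac : Type := OreLocalization (⊤ : Submonoid PosBraidMonoid) PosBraidMonoid

noncomputable def toUnits : PosBraidMonoid →* Fracˣ :=
  IsUnit.liftRight OreLocalization.numeratorHom fun x =>
    OreLocalization.numerator_isUnit (⟨x, trivial⟩ : (⊤ : Submonoid PosBraidMonoid))

theorem toUnits_injective : Function.Injective toUnits := by
  intro x y h
  have h' : x /ₒ (1 : (⊤ : Submonoid PosBraidMonoid)) = y /ₒ 1 := congrArg Units.val h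
  obtain ⟨s, t, hst, hs⟩ := OreLocalization.oreDiv_eq_iff.1 h'
  simp only [OneMemClass.coe_one, mul_one, Submonoid.smul_def, smul_eq_mul] at hs hst
  rw [hs] at hst
  exact (mul_left_cancel hst).symm

end PosBraidMonoid

end BraidWord

namespace Submonoid

variable {G : Type*} [Group G] (M : Submonoid G)

def IsLeftCoprime (a b : G) : Prop := ∀ γ ∈ M, γ⁻¹ * a ∈ M → γ⁻¹ * b ∈ M → γ = 1

def IsLeftGCD (g x y : G) : Prop :=
  g⁻¹ * x ∈ M ∧ g⁻¹ * y ∈ M ∧ ∀ γ ∈ M, γ⁻¹ * x ∈ M → γ⁻¹ * y ∈ M → γ⁻¹ * g ∈ M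

variable {M}

theorem exists_eq_inv_mul (hore : ∀ x ∈ M, ∀ y ∈ M, ∃ e ∈ M, ∃ f ∈ M, e * x = f * y)
    (hgen : Subgroup.closure (M : Set G) = ⊤) (β : G) : ∃ x ∈ M, ∃ y ∈ M, β = x⁻¹ * y := by
  have hβ : β ∈ Subgroup.closure (M : Set G) := hgen ▸ Subgroup.mem_top β
  induction hβ using Subgroup.closure_induction with
  | mem y hy => exact ⟨1, M.one_mem, y, hy, by simp⟩
  | one => exact ⟨1, M.one_mem, 1, M.one_mem, by simp⟩
  | mul _ _ _ _ ih₁ ih₂ =>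
    obtain ⟨x, hx, y, hy, rfl⟩ := ih₁
    obtain ⟨x', hx', y', hy', rfl⟩ := ih₂
    obtain ⟨e, he, f, hf, hef⟩ := hore x' hx' y hy
    refine ⟨f * x, M.mul_mem hf hx, e * y', M.mul_mem he hy', ?_⟩
    calc x⁻¹ * y * (x'⁻¹ * y') = x⁻¹ * f⁻¹ * (f * y) * x'⁻¹ * y' := by group
      _ = (f * x)⁻¹ * (e * y') := by rw [← hef]; group
  | inv _ _ ih =>
    obtain ⟨x, hx, y, hy, rfl⟩ := ih
    exact ⟨y, hy, x, hx, by group⟩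

theorem isLeftCoprime_inv_mul (hunit : ∀ x ∈ M, x⁻¹ ∈ M → x = 1) {g x y : G} (hg : g ∈ M)
    (hgcd : M.IsLeftGCD g x y) : M.IsLeftCoprime (g⁻¹ * x) (g⁻¹ * y) := by
  intro γ hγ hγx hγy
  refine hunit γ hγ ?_
  have := hgcd.2.2 (g * γ) (M.mul_mem hg hγ) (by simpa [mul_assoc] using hγx)
    (by simpa [mul_assoc] using hγy)
  simpa using this

theorem IsLeftCoprime.eq_of_isLeftGCD_mul {a b e g : G} (hab : M.IsLeftCoprime a b)
    (ha : a ∈ M) (hb : b ∈ M) (he : e ∈ M) (hg : M.IsLeftGCD g (e * a) (e * b)) : e = g := by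
  have heg : e⁻¹ * g ∈ M := hg.2.2 e he (by simpa using ha) (by simpa using hb)
  have := hab _ heg (by simpa [mul_assoc] using hg.1) (by simpa [mul_assoc] using hg.2.1)
  exact inv_mul_eq_one.1 this

theorem IsLeftCoprime.unique (hore : ∀ x ∈ M, ∀ y ∈ M, ∃ e ∈ M, ∃ f ∈ M, e * x = f * y)
    (hgcd : ∀ x ∈ M, ∀ y ∈ M, ∃ g ∈ M, M.IsLeftGCD g x y) {a b c d : G}
    (ha : a ∈ M) (hb : b ∈ M) (hc : c ∈ M) (hd : d ∈ M)
    (hab : M.IsLeftCoprime a b) (hcd : M.IsLeftCoprime c d) (h : a⁻¹ * b = c⁻¹ * d) :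
    a = c ∧ b = d := by
  obtain ⟨e, he, f, hf, hac⟩ := hore a ha c hc
  have hbd : e * b = f * d := by
    calc e * b = e * a * (a⁻¹ * b) := by group
      _ = f * c * (c⁻¹ * d) := by rw [hac, h]
      _ = f * d := by group
  obtain ⟨g, -, hg⟩ := hgcd _ (M.mul_mem he ha) _ (M.mul_mem he hb)
  have heg : e = g := hab.eq_of_isLeftGCD_mul ha hb he hg
  have hfg : f = g := hcd.eq_of_isLeftGCD_mul hc hd hf (by rwa [← hac, ← hbd])
  rw [heg, ← hfg] at hac hbd
  exact ⟨mul_left_cancel hac, mul_left_cancel hbd⟩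

theorem existsUnique_isLeftCoprime_inv_mul (hunit : ∀ x ∈ M, x⁻¹ ∈ M → x = 1)
    (hore : ∀ x ∈ M, ∀ y ∈ M, ∃ e ∈ M, ∃ f ∈ M, e * x = f * y)
    (hgcd : ∀ x ∈ M, ∀ y ∈ M, ∃ g ∈ M, M.IsLeftGCD g x y)
    (hgen : Subgroup.closure (M : Set G) = ⊤) (β : G) :
    ∃! p : G × G, p.1 ∈ M ∧ p.2 ∈ M ∧ β = p.1⁻¹ * p.2 ∧ M.IsLeftCoprime p.1 p.2 := by
  obtain ⟨x, hx, y, hy, rfl⟩ := exists_eq_inv_mul hore hgen β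
  obtain ⟨g, hg, hgxy⟩ := hgcd x hx y hy
  refine ⟨(g⁻¹ * x, g⁻¹ * y), ⟨hgxy.1, hgxy.2.1, by group, isLeftCoprime_inv_mul hunit hg hgxy⟩, ?_⟩
  rintro ⟨c, d⟩ ⟨hc, hd, hcd, hcop⟩
  obtain ⟨rfl, rfl⟩ := IsLeftCoprime.unique hore hgcd hc hd hgxy.1 hgxy.2.1 hcop
    (isLeftCoprime_inv_mul hunit hg hgxy) (by rw [← hcd]; group)
  rfl

end Submonoid

namespace Braid

/-- Defining relations of the braid group, with generators indexed by `Fin m`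
(the index `i : Fin m` stands for the Artin generator `σ_{i+1}`). -/
def braidRels (m : ℕ) : Set (FreeGroup (Fin m)) :=
  {r | ∃ i j : Fin m,
      ((i : ℕ) + 2 ≤ (j : ℕ) ∧
        r = FreeGroup.of i * FreeGroup.of j * (FreeGroup.of i)⁻¹ * (FreeGroup.of j)⁻¹) ∨
      ((j : ℕ) = (i : ℕ) + 1 ∧
        r = FreeGroup.of i * FreeGroup.of j * FreeGroup.of i *
            (FreeGroup.of j)⁻¹ * (FreeGroup.of i)⁻¹ * (FreeGroup.of j)⁻¹)}

/-- The braid group `B_n` on `n` strands, presented by the Artin generators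
`σ_1, …, σ_{n-1}` and the braid relations. -/
abbrev B (n : ℕ) : Type := PresentedGroup (braidRels (n - 1))

/-- The Artin generator `σ_i` of `B n`, for `1 ≤ i ≤ n-1` (junk value `1` otherwise). -/
def gen (n i : ℕ) : B n :=
  if h : i - 1 < n - 1 then PresentedGroup.of (⟨i - 1, h⟩ : Fin (n - 1)) else 1

/-- The positive braid monoid `B⁺_k` inside `B n`: the submonoid generated by
`σ_1, …, σ_{k-1}`. -/
def Bplus (n k : ℕ) : Submonoid (B n) :=
  Submonoid.closure {x | ∃ i, 1 ≤ i ∧ i + 1 ≤ k ∧ x = gen n i}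

/-- The subgroup `B_k` of `B n`, generated by `σ_1, …, σ_{k-1}`. -/
def Bsub (n k : ℕ) : Subgroup (B n) :=
  Subgroup.closure {x | ∃ i, 1 ≤ i ∧ i + 1 ≤ k ∧ x = gen n i}

/-- `β` left-divides `γ` (with respect to the positive monoid `B⁺_n`). -/
def LDiv (n : ℕ) (β γ : B n) : Prop := β⁻¹ * γ ∈ Bplus n n

/-- `β` right-divides `γ` (with respect to the positive monoid `B⁺_n`). -/
def RDiv (n : ℕ) (β γ : B n) : Prop := γ * β⁻¹ ∈ Bplus n n

/-- The Garside element `Δ_k = (σ_1⋯σ_{k-1})(σ_1⋯σ_{k-2})⋯(σ_1σ_2)σ_1` of `B⁺_k`,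
viewed inside `B n`. -/
def delta (n k : ℕ) : B n :=
  ((List.range (k - 1)).reverse.map
    (fun j => ((List.range' 1 (j + 1)).map (gen n)).prod)).prod

/-- The `k`-th power of the flip automorphism `φ_n` of `B n`:
conjugation by `Δ_n^k`. -/
def flip (n k : ℕ) (x : B n) : B n := delta n n ^ k * x * (delta n n ^ k)⁻¹

/-- The set `φ_n^k(B⁺_{n-1})` inside `B n`. -/
def flipSet (n k : ℕ) : Set (B n) := flip n k '' (Bplus n (n - 1) : Set (B n))

/-- `δ` is the maximal right divisor of `β` lying in the set `X`:
`δ ∈ X`, `δ` right-divides `β`, and every right divisor of `β` lying in `X`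
right-divides `δ`. -/
def IsMaxRDivIn (n : ℕ) (X : Set (B n)) (β δ : B n) : Prop :=
  δ ∈ X ∧ RDiv n δ β ∧ ∀ γ ∈ X, RDiv n γ β → RDiv n γ δ

/-- The product `φ_n^{d-1}(b d) ⋯ φ_n^{k-1}(b k)` (factors in decreasing order of
the index, from `d` down to `k`). -/
def tailProd (n : ℕ) (b : ℕ → B n) (k d : ℕ) : B n :=
  ((List.range' k (d + 1 - k)).reverse.map (fun l => flip n (l - 1) (b l))).prod

/-- `(b d, …, b 1)` is the `φ_n`-splitting of `β`: each `b k` lies in `B⁺_{n-1}`,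
`b d ≠ 1`, `β = φ_n^{d-1}(b d) ⋯ φ_n(b 2) (b 1)`, and for each `k`, the element
`φ_n^{k-1}(b k)` is the maximal right divisor of `φ_n^{d-1}(b d) ⋯ φ_n^{k-1}(b k)`
lying in `φ_n^{k-1}(B⁺_{n-1})`. -/
def IsSplitting (n d : ℕ) (b : ℕ → B n) (β : B n) : Prop :=
  1 ≤ d ∧ (∀ k, 1 ≤ k → k ≤ d → b k ∈ Bplus n (n - 1)) ∧ b d ≠ 1 ∧
  β = tailProd n b 1 d ∧
  ∀ k, 1 ≤ k → k ≤ d →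
    IsMaxRDivIn n (flipSet n (k - 1)) (tailProd n b k d) (flip n (k - 1) (b k))

/-- Evaluation of a word over the letters `σ_i^{±1}` in `B n`: the letter `(i, true)`
stands for `σ_i` and `(i, false)` for `σ_i⁻¹`. -/
def evalWord (n : ℕ) (w : List (ℕ × Bool)) : B n :=
  (w.map (fun p => if p.2 then gen n p.1 else (gen n p.1)⁻¹)).prod

/-- A word over the letters `σ_j^{±1}` is `σ_i`-positive: it contains at least one
letter `σ_i`, no letter `σ_i⁻¹` and no letter `σ_j^{±1}` with `j > i`. -/
def SigmaPos (i : ℕ) (w : List (ℕ × Bool)) : Prop :=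
  (i, true) ∈ w ∧ (i, false) ∉ w ∧ ∀ p ∈ w, 1 ≤ p.1 ∧ p.1 ≤ i

/-- A word over the letters `σ_j^{±1}` is `σ_i`-negative: it contains at least one
letter `σ_i⁻¹`, no letter `σ_i` and no letter `σ_j^{±1}` with `j > i`. -/
def SigmaNeg (i : ℕ) (w : List (ℕ × Bool)) : Prop :=
  (i, false) ∈ w ∧ (i, true) ∉ w ∧ ∀ p ∈ w, 1 ≤ p.1 ∧ p.1 ≤ i

/-- The Dehornoy ordering on `B n`: `β < γ` iff `β⁻¹γ` is represented by a
`σ_i`-positive word for some `i ≤ n-1`. -/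
def dlt (n : ℕ) (β γ : B n) : Prop :=
  ∃ i w, i + 1 ≤ n ∧ SigmaPos i w ∧ evalWord n w = β⁻¹ * γ

/-- The nonstrict Dehornoy ordering. -/
def dle (n : ℕ) (β γ : B n) : Prop := dlt n β γ ∨ β = γ

/-- The minimal length of a word over `σ_1^{±1}, …, σ_{n-1}^{±1}` representing `β`. -/
noncomputable def normSigma (n : ℕ) (β : B n) : ℕ :=
  sInf {l | ∃ w : List (ℕ × Bool), (∀ p ∈ w, 1 ≤ p.1 ∧ p.1 ≤ n - 1) ∧
    evalWord n w = β ∧ w.length = l}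

/-- The (common) length of the positive words over `σ_1, …, σ_{n-1}` representing a
positive braid `β`. -/
noncomputable def posLen (n : ℕ) (β : B n) : ℕ :=
  sInf {l | ∃ w : List (ℕ × Bool), (∀ p ∈ w, 1 ≤ p.1 ∧ p.1 ≤ n - 1 ∧ p.2 = true) ∧
    evalWord n w = β ∧ w.length = l}

/-- The Birman–Ko–Lee generator `a_{p,q} = σ_p ⋯ σ_{q-2} σ_{q-1} σ_{q-2}⁻¹ ⋯ σ_p⁻¹`
of `B n`. -/
def bkl (n p q : ℕ) : B n :=
  ((List.range' p (q - 1 - p)).map (gen n)).prod * gen n (q - 1) *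
    (((List.range' p (q - 1 - p)).map (gen n)).prod)⁻¹

/-- The dual braid monoid `B⁺*_n`: the submonoid of `B n` generated by the
Birman–Ko–Lee generators. -/
def DualBplus (n : ℕ) : Submonoid (B n) :=
  Submonoid.closure {x | ∃ p q, 1 ≤ p ∧ p < q ∧ q ≤ n ∧ x = bkl n p q}

/-- Evaluation in `B n` of a word over the letters `a_{p,q}^{±1}`. -/
def evalDual (n : ℕ) (w : List ((ℕ × ℕ) × Bool)) : B n :=
  (w.map (fun l => if l.2 then bkl n l.1.1 l.1.2 else (bkl n l.1.1 l.1.2)⁻¹)).prod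

/-- The minimal length of a word over the letters `a_{p,q}^{±1}` (`1 ≤ p < q ≤ n`)
representing `β`. -/
noncomputable def normDual (n : ℕ) (β : B n) : ℕ :=
  sInf {l | ∃ w : List ((ℕ × ℕ) × Bool),
    (∀ p ∈ w, 1 ≤ p.1.1 ∧ p.1.1 < p.1.2 ∧ p.1.2 ≤ n) ∧ evalDual n w = β ∧ w.length = l}

open BraidWord

theorem of_mul_of_comm {m : ℕ} {i j : Fin m} (h : (i : ℕ) + 2 ≤ j) :
    (PresentedGroup.of i : PresentedGroup (braidRels m)) * PresentedGroup.of j =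
      PresentedGroup.of j * PresentedGroup.of i := by
  have := PresentedGroup.one_of_mem (rels := braidRels m) ⟨i, j, .inl ⟨h, rfl⟩⟩
  simp only [map_mul, map_inv] at this
  rwa [mul_inv_eq_one, mul_inv_eq_iff_eq_mul] at this

theorem of_mul_of_mul_of {m : ℕ} {i j : Fin m} (h : (j : ℕ) = i + 1) :
    (PresentedGroup.of i : PresentedGroup (braidRels m)) * PresentedGroup.of j *
        PresentedGroup.of i =
      PresentedGroup.of j * PresentedGroup.of i * PresentedGroup.of j := by
  have := PresentedGroup.one_of_mem (rels := braidRels m) ⟨i, j, .inr ⟨h, rfl⟩⟩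
  simp only [map_mul, map_inv] at this
  rwa [mul_inv_eq_one, mul_inv_eq_iff_eq_mul, mul_inv_eq_iff_eq_mul] at this

theorem lift_braidRels_eq_one {G : Type*} [Group G] {m : ℕ} {f : Fin m → G}
    (hcomm : ∀ i j : Fin m, (i : ℕ) + 2 ≤ j → f i * f j = f j * f i)
    (hbraid : ∀ i j : Fin m, (j : ℕ) = i + 1 → f i * f j * f i = f j * f i * f j) :
    ∀ r ∈ braidRels m, FreeGroup.lift f r = 1 := by
  rintro r ⟨i, j, ⟨h, rfl⟩ | ⟨h, rfl⟩⟩ <;> simp only [map_mul, map_inv, FreeGroup.lift_apply_of]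
  · rw [hcomm i j h]; group
  · rw [hbraid i j h]; group

/-- The value in `B n` of a positive word. Letters `a ≥ n - 1` take the junk value
`gen n (a + 1) = 1`, so only words `Bounded (n - 1)` are meaningful. -/
def evalPos (n : ℕ) (u : Word) : B n := (u.map fun a => gen n (a + 1)).prod

theorem evalPos_nil (n : ℕ) : evalPos n [] = 1 := rfl

theorem evalPos_cons (n a : ℕ) (u : Word) : evalPos n (a :: u) = gen n (a + 1) * evalPos n u := by
  simp [evalPos]

theorem evalPos_append (n : ℕ) (u v : Word) : evalPos n (u ++ v) = evalPos n u * evalPos n v := by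
  simp [evalPos]

theorem gen_succ_eq_of {n a : ℕ} (h : a < n - 1) : gen n (a + 1) = PresentedGroup.of ⟨a, h⟩ := by
  simp [gen, h]

theorem evalPos_eq_of_braidRel {n : ℕ} {l r : Word} (hl : Bounded (n - 1) l) (h : BraidRel l r) :
    evalPos n l = evalPos n r := by
  cases h with
  | @comm a b hab =>
    have ha := hl a (by simp)
    have hb := hl b (by simp)
    simp only [evalPos, List.map_cons, List.map_nil, List.prod_cons, List.prod_nil, mul_one,
      gen_succ_eq_of ha, gen_succ_eq_of hb]
    rcases hab with hab | hab
    exacts [of_mul_of_comm (i := ⟨a, ha⟩) (j := ⟨b, hb⟩) hab,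
      (of_mul_of_comm (i := ⟨b, hb⟩) (j := ⟨a, ha⟩) hab).symm]
  | @braid a b hab =>
    have ha := hl a (by simp)
    have hb := hl b (by simp)
    simp only [evalPos, List.map_cons, List.map_nil, List.prod_cons, List.prod_nil, mul_one,
      gen_succ_eq_of ha, gen_succ_eq_of hb, ← mul_assoc]
    rcases hab with hab | hab
    exacts [of_mul_of_mul_of (i := ⟨a, ha⟩) (j := ⟨b, hb⟩) hab,
      (of_mul_of_mul_of (i := ⟨b, hb⟩) (j := ⟨a, ha⟩) hab).symm]

theorem evalPos_eq_of_eqv {n : ℕ} {u v : Word} (hu : Bounded (n - 1) u) (h : u ≋ v) :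
    evalPos n u = evalPos n v := by
  induction h with
  | refl => rfl
  | tail huv hs ih =>
    obtain ⟨x, l, r, y, hlr, rfl, rfl⟩ := hs
    have hl : Bounded (n - 1) l := fun a ha => hu.of_eqv huv a (by simp [ha])
    simp only [ih, evalPos_append, evalPos_eq_of_braidRel hl hlr]

theorem mem_Bplus_iff {n : ℕ} {x : B n} :
    x ∈ Bplus n n ↔ ∃ u, Bounded (n - 1) u ∧ evalPos n u = x := by
  constructor
  · intro hx
    induction hx using Submonoid.closure_induction with
    | mem x hx =>
      obtain ⟨i, hi₁, hi₂, rfl⟩ := hx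
      exact ⟨[i - 1], by simp [Bounded]; omega, by simp [evalPos, Nat.sub_add_cancel hi₁]⟩
    | one => exact ⟨[], by simp [Bounded], rfl⟩
    | mul x y _ _ hx hy =>
      obtain ⟨u, hu, rfl⟩ := hx
      obtain ⟨v, hv, rfl⟩ := hy
      exact ⟨u ++ v, hu.append hv, evalPos_append n u v⟩
  · rintro ⟨u, hu, rfl⟩
    induction u with
    | nil => exact one_mem _
    | cons a u ih =>
      rw [evalPos_cons]
      have ha := hu a (by simp)
      exact mul_mem (Submonoid.subset_closure ⟨a + 1, by omega, by omega, rfl⟩)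
        (ih fun b hb => hu b (by simp [hb]))

theorem evalPos_mem_Bplus {n : ℕ} {u : Word} (hu : Bounded (n - 1) u) : evalPos n u ∈ Bplus n n :=
  mem_Bplus_iff.2 ⟨u, hu, rfl⟩

noncomputable def toFrac (n : ℕ) :
    B n →* PosBraidMonoid.Fracˣ :=
  PresentedGroup.toGroup
    (lift_braidRels_eq_one (f := fun i : Fin (n - 1) => PosBraidMonoid.toUnits (.mk [(i : ℕ)]))
      (fun i j h => by
        simp only [← map_mul, PosBraidMonoid.mk_mul]
        exact congrArg _ (PosBraidMonoid.mk_eq_mk_iff.2 (Eqv.swap (.inl h) [])))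
      (fun i j h => by
        simp only [← map_mul, PosBraidMonoid.mk_mul]
        exact congrArg _ (PosBraidMonoid.mk_eq_mk_iff.2 (Eqv.braid (.inl h) []))))

theorem toFrac_evalPos {n : ℕ} {u : Word} (hu : Bounded (n - 1) u) :
    toFrac n (evalPos n u) = PosBraidMonoid.toUnits (.mk u) := by
  induction u with
  | nil => rw [evalPos_nil, map_one]; exact (map_one _).symm
  | cons a u ih =>
    have ha := hu a (by simp)
    rw [evalPos_cons, map_mul, ih fun b hb => hu b (by simp [hb]), gen_succ_eq_of ha, toFrac,
      PresentedGroup.toGroup.of, ← map_mul, PosBraidMonoid.mk_mul]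
    rfl

theorem eqv_of_evalPos_eq {n : ℕ} {u v : Word} (hu : Bounded (n - 1) u) (hv : Bounded (n - 1) v)
    (h : evalPos n u = evalPos n v) : u ≋ v :=
  PosBraidMonoid.mk_eq_mk_iff.1 <| PosBraidMonoid.toUnits_injective <| by
    rw [← toFrac_evalPos hu, ← toFrac_evalPos hv, h]

theorem ldiv_evalPos_iff {n : ℕ} {g u : Word} (hg : Bounded (n - 1) g) (hu : Bounded (n - 1) u) :
    LDiv n (evalPos n g) (evalPos n u) ↔ LDvd g u := by
  constructor
  · intro h
    obtain ⟨w, hw, hgw⟩ := mem_Bplus_iff.1 h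
    refine ⟨w, eqv_of_evalPos_eq hu (hg.append hw) ?_⟩
    rw [evalPos_append, hgw, mul_inv_cancel_left]
  · rintro ⟨w, hw⟩
    have hwb : Bounded (n - 1) w := fun a ha => hu.of_eqv hw a (by simp [ha])
    show (evalPos n g)⁻¹ * evalPos n u ∈ Bplus n n
    rw [evalPos_eq_of_eqv hu hw, evalPos_append, inv_mul_cancel_left]
    exact evalPos_mem_Bplus hwb

theorem eq_one_of_mem_Bplus_of_inv_mem {n : ℕ} {x : B n} (hx : x ∈ Bplus n n)
    (hx' : x⁻¹ ∈ Bplus n n) : x = 1 := by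
  obtain ⟨u, hu, rfl⟩ := mem_Bplus_iff.1 hx
  obtain ⟨v, hv, huv⟩ := mem_Bplus_iff.1 hx'
  have h : u ++ v ≋ [] := eqv_of_evalPos_eq (hu.append hv) (by simp [Bounded])
    (by rw [evalPos_append, huv, mul_inv_cancel, evalPos_nil])
  obtain ⟨rfl, -⟩ : u = [] ∧ v = [] := by simpa using h.length_eq
  rfl

theorem exists_mul_eq_mul_of_mem_Bplus {n : ℕ} {x y : B n} (hx : x ∈ Bplus n n)
    (hy : y ∈ Bplus n n) : ∃ e ∈ Bplus n n, ∃ f ∈ Bplus n n, e * x = f * y := by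
  obtain ⟨u, hu, rfl⟩ := mem_Bplus_iff.1 hx
  obtain ⟨v, hv, rfl⟩ := mem_Bplus_iff.1 hy
  obtain ⟨e, f, he, hf, h⟩ := exists_common_left_multiple hu hv
  refine ⟨_, evalPos_mem_Bplus he, _, evalPos_mem_Bplus hf, ?_⟩
  rw [← evalPos_append, ← evalPos_append, evalPos_eq_of_eqv (he.append hu) h]

theorem exists_isLeftGCD_of_mem_Bplus {n : ℕ} {x y : B n} (hx : x ∈ Bplus n n)
    (hy : y ∈ Bplus n n) : ∃ g ∈ Bplus n n, (Bplus n n).IsLeftGCD g x y := by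
  obtain ⟨u, hu, rfl⟩ := mem_Bplus_iff.1 hx
  obtain ⟨v, hv, rfl⟩ := mem_Bplus_iff.1 hy
  obtain ⟨g, hgu, hgv, hmax⟩ := exists_gcd u v
  have hg : Bounded (n - 1) g := hu.of_ldvd hgu
  refine ⟨_, evalPos_mem_Bplus hg, (ldiv_evalPos_iff hg hu).2 hgu,
    (ldiv_evalPos_iff hg hv).2 hgv, ?_⟩
  intro γ hγ hγu hγv
  obtain ⟨h, hh, rfl⟩ := mem_Bplus_iff.1 hγ
  exact (ldiv_evalPos_iff hh hg).2
    (hmax h ((ldiv_evalPos_iff hh hu).1 hγu) ((ldiv_evalPos_iff hh hv).1 hγv))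

theorem closure_Bplus_eq_top (n : ℕ) : Subgroup.closure (Bplus n n : Set (B n)) = ⊤ := by
  refine eq_top_iff.2 ((PresentedGroup.closure_range_of _).symm.le.trans (Subgroup.closure_mono ?_))
  rintro _ ⟨i, rfl⟩
  rw [← gen_succ_eq_of i.isLt]
  exact Submonoid.subset_closure ⟨i + 1, by omega, by omega, rfl⟩

theorem garside_thurston_exists_unique_general (n : ℕ) (β : B n) :
    ∃! p : B n × B n, p.1 ∈ Bplus n n ∧ p.2 ∈ Bplus n n ∧ β = p.1⁻¹ * p.2 ∧
      ∀ γ ∈ Bplus n n, LDiv n γ p.1 → LDiv n γ p.2 → γ = 1 :=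
  Submonoid.existsUnique_isLeftCoprime_inv_mul (fun _ hx => eq_one_of_mem_Bplus_of_inv_mem hx)
    (fun _ hx _ hy => exists_mul_eq_mul_of_mem_Bplus hx hy)
    (fun _ hx _ hy => exists_isLeftGCD_of_mem_Bplus hx hy) (closure_Bplus_eq_top n) β

/-- Every `β ∈ B_n` admits a unique decomposition `β = β'⁻¹ β''` with
`β', β'' ∈ B⁺_n` whose only common left divisor in `B⁺_n` is `1`. -/
theorem garside_thurston_exists_unique (n : ℕ) (hn : 2 ≤ n) (β : B n) :
    ∃! p : B n × B n, p.1 ∈ Bplus n n ∧ p.2 ∈ Bplus n n ∧ β = p.1⁻¹ * p.2 ∧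
      ∀ γ ∈ Bplus n n, LDiv n γ p.1 → LDiv n γ p.2 → γ = 1 :=
  garside_thurston_exists_unique_general n β

end Braid
end

section
/- Let n ≥ 3, let d be a nonnegative integer, and let β ∈ B⁺_n satisfy Δ̂_{n−1,d} ≤ β ≤ Δ_n^d in the Dehornoy ordering, where Δ̂_{n−1,d} = Δ_n^d Δ_{n−1}^{−d}. Then the quotient Δ_n^{−d} β lies in the subgroup B_{n−1} of B_n. -/
/-!
A `σ_j`-positive word with `j < n - 1` lies in `B_{n-1}`, and so does `Δ_{n-1}`. Hence
`Δ_n^{-d} β = (β⁻¹ Δ_n^d)⁻¹ = Δ_{n-1}^{-d} (Δ̂⁻¹ β)` lies in `B_{n-1}` unless both `β⁻¹ Δ_n^d` and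
`Δ̂⁻¹ β` are `σ_{n-1}`-positive; but then so is their product `Δ_{n-1}^d`, which lies in `B_{n-1}`.

That a `σ_i`-positive braid never lies in `B_i` is seen (after Larue) on Artin's action of `B_n` on
the free group on `x_1, x_2, …`, where `σ_p` sends `x_p ↦ x_p x_{p+1} x_p⁻¹`, `x_{p+1} ↦ x_p`.
Braids of `B_i` fix `x_{i+1}⁻¹`, whose reduced word starts with `x_{i+1}⁻¹`. Following how `σ_p`
changes the first letters of a reduced word shows that `σ_p^{±1}` with `p < i` neither creates nor
destroys a leading `x_{i+1}⁻¹`, that `σ_i` never creates one, and `σ_i` sends `x_{i+1}⁻¹` to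
`x_i⁻¹`. So the image of `x_{i+1}⁻¹` under a `σ_i`-positive braid does not start with `x_{i+1}⁻¹`.
-/

namespace FreeGroup

variable {α : Type*}

theorem mulAut_ext {f g : MulAut (FreeGroup α)} (h : ∀ a, f (of a) = g (of a)) : f = g :=
  MulEquiv.toMonoidHom_injective (ext_hom _ _ h)

theorem mk_singleton_true (a : α) : mk [(a, true)] = of a := rfl

theorem mk_singleton_false (a : α) : mk [(a, false)] = (of a)⁻¹ := by
  rw [of, inv_mk]; rfl

variable [DecidableEq α]

theorem toWord_head?_eq_none_iff {g : FreeGroup α} : g.toWord.head? = none ↔ g = 1 := by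
  rw [List.head?_eq_none_iff, toWord_eq_nil_iff]

theorem toWord_mk_singleton_mul_of_head_ne {x : α × Bool} {g : FreeGroup α}
    (h : g.toWord.head? ≠ some (x.1, !x.2)) : (mk [x] * g).toWord = x :: g.toWord := by
  rw [toWord_mul, toWord_mk, reduce_singleton, List.singleton_append, reduce.cons, reduce_toWord]
  rcases hg : g.toWord with _ | ⟨y, w⟩
  · rfl
  · rw [hg] at h
    simp only [List.head?_cons, ne_eq, Option.some.injEq] at h
    refine if_neg ?_
    rintro ⟨h1, h2⟩
    exact h (by rw [h1, h2, Bool.not_not])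

theorem toWord_mk_singleton_mul_of_toWord_eq {x : α × Bool} {g : FreeGroup α}
    {w : List (α × Bool)} (h : g.toWord = (x.1, !x.2) :: w) : (mk [x] * g).toWord = w := by
  rw [toWord_mul, toWord_mk, reduce_singleton, List.singleton_append, reduce.cons, reduce_toWord,
    h]
  simp

theorem induction_on_toWord {P : FreeGroup α → Prop} (one : P 1)
    (mk_mul : ∀ x g, g.toWord.head? ≠ some (x.1, !x.2) → P g → P (mk [x] * g))
    (g : FreeGroup α) : P g := by
  induction hg : g.toWord generalizing g with
  | nil => rw [toWord_eq_nil_iff.mp hg]; exact one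
  | cons x w ih =>
    have hw : (mk w).toWord = w := by
      rw [toWord_mk]
      exact (isReduced_toWord.infix (hg ▸ List.suffix_cons x w).isInfix).reduce_eq
    have hhead : (mk w).toWord.head? ≠ some (x.1, !x.2) := by
      have := (hg ▸ isReduced_toWord : IsReduced (x :: w))
      rw [hw]
      rcases w with _ | ⟨y, w⟩
      · simp
      · intro hy
        simp only [List.head?_cons, Option.some.injEq] at hy
        subst hy
        simp [IsReduced] at this
    have : g = mk [x] * mk w := by rw [← mk_toWord (x := g), hg, mul_mk]; rfl
    rw [this]
    exact mk_mul x _ hhead (ih _ hw)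

end FreeGroup

namespace Braid

open FreeGroup

def artinImage (p k : ℕ) : FreeGroup ℕ :=
  if k = p then of p * of (p + 1) * (of p)⁻¹ else if k = p + 1 then of p else of k

def artinImageInv (p k : ℕ) : FreeGroup ℕ :=
  if k = p then of (p + 1) else if k = p + 1 then (of (p + 1))⁻¹ * of p * of (p + 1) else of k

def artinAut (p : ℕ) : MulAut (FreeGroup ℕ) :=
  MonoidHom.toMulEquiv (lift (artinImage p)) (lift (artinImageInv p))
    (by
      ext k
      simp only [MonoidHom.comp_apply, lift_apply_of, MonoidHom.id_apply]
      unfold artinImage artinImageInv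
      split_ifs <;> simp_all; group)
    (by
      ext k
      simp only [MonoidHom.comp_apply, lift_apply_of, MonoidHom.id_apply]
      unfold artinImage artinImageInv
      split_ifs <;> simp_all; group)

theorem artinAut_of_self (p : ℕ) : artinAut p (of p) = of p * of (p + 1) * (of p)⁻¹ :=
  (lift_apply_of).trans (if_pos rfl)

theorem artinAut_of_succ (p : ℕ) : artinAut p (of (p + 1)) = of p :=
  (lift_apply_of).trans (by simp [artinImage])

theorem artinAut_of_of_ne {p k : ℕ} (h : k ≠ p) (h' : k ≠ p + 1) : artinAut p (of k) = of k :=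
  (lift_apply_of).trans (by simp [artinImage, h, h'])

theorem artinAut_comm {p q : ℕ} (h : p + 2 ≤ q) :
    artinAut p * artinAut q = artinAut q * artinAut p := by
  refine mulAut_ext fun k => ?_
  simp only [MulAut.mul_apply]
  obtain rfl | rfl | rfl | rfl | hk : k = p ∨ k = p + 1 ∨ k = q ∨ k = q + 1 ∨
      (k ≠ p ∧ k ≠ p + 1 ∧ k ≠ q ∧ k ≠ q + 1) := by omega
  all_goals simp (disch := omega) only [artinAut_of_self, artinAut_of_succ, artinAut_of_of_ne,
    _root_.map_mul, _root_.map_inv]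

theorem artinAut_braid (p : ℕ) : artinAut p * artinAut (p + 1) * artinAut p =
    artinAut (p + 1) * artinAut p * artinAut (p + 1) := by
  refine mulAut_ext fun k => ?_
  simp only [MulAut.mul_apply]
  obtain rfl | rfl | rfl | hk : k = p ∨ k = p + 1 ∨ k = p + 2 ∨
      (k ≠ p ∧ k ≠ p + 1 ∧ k ≠ p + 2) := by omega
  all_goals simp (disch := omega) only [artinAut_of_self, artinAut_of_succ, artinAut_of_of_ne,
    _root_.map_mul, _root_.map_inv]
  all_goals group

theorem artinAut_mk_of_ne {p : ℕ} {x : ℕ × Bool} (h : x.1 ≠ p) (h' : x.1 ≠ p + 1) :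
    artinAut p (mk [x]) = mk [x] := by
  obtain ⟨k, _ | _⟩ := x
  · rw [mk_singleton_false, _root_.map_inv, artinAut_of_of_ne h h']
  · exact artinAut_of_of_ne h h'

theorem artinAut_mk_self (p : ℕ) (e : Bool) :
    artinAut p (mk [(p, e)]) = mk [(p, true)] * mk [(p + 1, e)] * mk [(p, false)] := by
  cases e
  · simp only [mk_singleton_false, mk_singleton_true, _root_.map_inv, artinAut_of_self]; group
  · simp only [mk_singleton_false, mk_singleton_true, artinAut_of_self]

theorem artinAut_mk_succ (p : ℕ) (e : Bool) : artinAut p (mk [(p + 1, e)]) = mk [(p, e)] := by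
  cases e
  · rw [mk_singleton_false, mk_singleton_false, _root_.map_inv, artinAut_of_succ]
  · exact artinAut_of_succ p

theorem letter_cases_self_succ (p : ℕ) (x : ℕ × Bool) : (x.1 ≠ p ∧ x.1 ≠ p + 1) ∨
    (∃ e, x = (p, e)) ∨ x = (p + 1, true) ∨ x = (p + 1, false) := by
  obtain ⟨k, e⟩ := x
  by_cases hp : k = p
  · exact Or.inr (Or.inl ⟨e, by rw [hp]⟩)
  by_cases hq : k = p + 1
  · subst hq; cases e <;> simp
  · exact Or.inl ⟨hp, hq⟩

section ArtinHead

variable {p : ℕ} {g : FreeGroup ℕ}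

theorem head?_artinAut_of_head?_eq_none (h : g.toWord.head? = none) :
    (artinAut p g).toWord.head? = none := by
  rw [toWord_head?_eq_none_iff.mp h, _root_.map_one, toWord_one]; rfl

/-- The clauses are bundled because the induction on the reduced word of `g` (`artinHeadSpec`)
needs all of them for the tail. -/
def ArtinHeadSpec (p : ℕ) (g : FreeGroup ℕ) : Prop :=
  (∀ x : ℕ × Bool, x.1 ≠ p → x.1 ≠ p + 1 → g.toWord.head? = some x →
    (artinAut p g).toWord.head? = some x) ∧
  (∀ e, g.toWord.head? = some (p, e) →
    ∃ z, (artinAut p g).toWord = (p, true) :: (p + 1, e) :: z) ∧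
  (g.toWord.head? = some (p + 1, true) → ∃ z, (artinAut p g).toWord = (p, true) :: z ∧
    ∀ c ∈ z.head?, c.1 ≠ p + 1 ∧ c ≠ (p, false)) ∧
  (g.toWord.head? = some (p + 1, false) →
    ∀ c ∈ (artinAut p g).toWord.head?, (c.1 = p ∨ c.1 = p + 1) ∧ c ≠ (p, true))

theorem ArtinHeadSpec.head?_eq_iff (hg : ArtinHeadSpec p g) {x : ℕ × Bool} (h : x.1 ≠ p)
    (h' : x.1 ≠ p + 1) : (artinAut p g).toWord.head? = some x ↔ g.toWord.head? = some x := by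
  obtain ⟨hlow, hself, hsucc, hsucc'⟩ := hg
  refine ⟨fun hA => ?_, hlow x h h'⟩
  rcases hy : g.toWord.head? with _ | y
  · rw [head?_artinAut_of_head?_eq_none hy] at hA
    cases hA
  obtain ⟨h1, h2⟩ | ⟨e, rfl⟩ | rfl | rfl := letter_cases_self_succ p y
  · rw [hlow y h1 h2 hy] at hA; exact hA
  · obtain ⟨z, hz⟩ := hself e hy
    rw [hz] at hA; cases hA; exact absurd rfl h
  · obtain ⟨z, hz, -⟩ := hsucc hy
    rw [hz] at hA; cases hA; exact absurd rfl h
  · obtain ⟨c1, c2⟩ := hsucc' hy x hA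
    omega

theorem ArtinHeadSpec.head?_ne_succ_of_ne (hg : ArtinHeadSpec p g)
    (h : g.toWord.head? ≠ some (p + 1, false)) :
    ∀ c ∈ (artinAut p g).toWord.head?, c.1 ≠ p + 1 ∧ c ≠ (p, false) := by
  obtain ⟨hlow, hself, hsucc, -⟩ := hg
  intro c hc
  rcases hy : g.toWord.head? with _ | y
  · rw [head?_artinAut_of_head?_eq_none hy] at hc
    cases hc
  obtain ⟨h1, h2⟩ | ⟨e, rfl⟩ | rfl | rfl := letter_cases_self_succ p y
  · rw [hlow y h1 h2 hy] at hc; cases hc; exact ⟨h2, fun h => h1 (congrArg Prod.fst h)⟩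
  · obtain ⟨z, hz⟩ := hself e hy
    rw [hz] at hc; cases hc; simp
  · obtain ⟨z, hz, -⟩ := hsucc hy
    rw [hz] at hc; cases hc; simp
  · exact absurd hy h

theorem ArtinHeadSpec.head?_of_eq_self (hg : ArtinHeadSpec p g)
    (h : (artinAut p g).toWord.head? = some (p, true)) :
    (∃ e, g.toWord.head? = some (p, e)) ∨ g.toWord.head? = some (p + 1, true) := by
  obtain ⟨hlow, -, -, hsucc'⟩ := hg
  rcases hy : g.toWord.head? with _ | y
  · rw [head?_artinAut_of_head?_eq_none hy] at h
    cases h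
  obtain ⟨h1, h2⟩ | ⟨e, rfl⟩ | rfl | rfl := letter_cases_self_succ p y
  · rw [hlow y h1 h2 hy] at h; cases h; exact absurd rfl h1
  · exact Or.inl ⟨e, rfl⟩
  · exact Or.inr rfl
  · exact absurd rfl (hsucc' hy _ h).2

theorem ArtinHeadSpec.head?_eq_succ_false (hg : ArtinHeadSpec p g)
    (h : (artinAut p g).toWord.head? = some (p + 1, false)) :
    g.toWord.head? = some (p + 1, false) := by
  obtain ⟨hlow, hself, hsucc, -⟩ := hg
  rcases hy : g.toWord.head? with _ | y
  · rw [head?_artinAut_of_head?_eq_none hy] at h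
    cases h
  obtain ⟨h1, h2⟩ | ⟨e, rfl⟩ | rfl | rfl := letter_cases_self_succ p y
  · rw [hlow y h1 h2 hy] at h; cases h; exact absurd rfl h2
  · obtain ⟨z, hz⟩ := hself e hy
    rw [hz] at h; cases h
  · obtain ⟨z, hz, -⟩ := hsucc hy
    rw [hz] at h; cases h
  · rfl

theorem ArtinHeadSpec.head?_mk_mul_of_ne (hg : ArtinHeadSpec p g) {x : ℕ × Bool} (h : x.1 ≠ p)
    (h' : x.1 ≠ p + 1) (hx : g.toWord.head? ≠ some (x.1, !x.2)) :
    (artinAut p (mk [x] * g)).toWord.head? = some x := by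
  rw [_root_.map_mul, artinAut_mk_of_ne h h', toWord_mk_singleton_mul_of_head_ne]
  · rfl
  · rwa [ne_eq, hg.head?_eq_iff (x := (x.1, !x.2)) h h']

theorem ArtinHeadSpec.toWord_mk_self_mul (hg : ArtinHeadSpec p g) (e : Bool)
    (hx : g.toWord.head? ≠ some (p, !e)) :
    ∃ z, (artinAut p (mk [(p, e)] * g)).toWord = (p, true) :: (p + 1, e) :: z := by
  rw [_root_.map_mul, artinAut_mk_self, mul_assoc, mul_assoc]
  suffices ∃ w, (mk [(p, false)] * artinAut p g).toWord = w ∧ w.head? ≠ some (p + 1, !e) by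
    obtain ⟨w, hw, hwe⟩ := this
    have hew : (mk [(p + 1, e)] * (mk [(p, false)] * artinAut p g)).toWord = (p + 1, e) :: w := by
      rw [toWord_mk_singleton_mul_of_head_ne (by rwa [hw]), hw]
    rw [toWord_mk_singleton_mul_of_head_ne (by rw [hew]; simp), hew]
    exact ⟨w, rfl⟩
  by_cases hA : (artinAut p g).toWord.head? = some (p, true)
  · rcases hg.head?_of_eq_self hA with ⟨e', he'⟩ | hsucc
    · obtain rfl : e' = e := by
        cases e <;> cases e' <;> simp_all
      obtain ⟨z, hz⟩ := hg.2.1 e' he'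
      exact ⟨_, toWord_mk_singleton_mul_of_toWord_eq hz, by cases e' <;> simp⟩
    · obtain ⟨z, hz, hzh⟩ := hg.2.2.1 hsucc
      refine ⟨_, toWord_mk_singleton_mul_of_toWord_eq hz, fun h => (hzh _ h).1 rfl⟩
  · exact ⟨_, toWord_mk_singleton_mul_of_head_ne hA, by simp⟩

theorem ArtinHeadSpec.toWord_mk_succ_true_mul (hg : ArtinHeadSpec p g)
    (hx : g.toWord.head? ≠ some (p + 1, false)) :
    ∃ z, (artinAut p (mk [(p + 1, true)] * g)).toWord = (p, true) :: z ∧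
      ∀ c ∈ z.head?, c.1 ≠ p + 1 ∧ c ≠ (p, false) := by
  rw [_root_.map_mul, artinAut_mk_succ]
  have hA := hg.head?_ne_succ_of_ne hx
  exact ⟨_, toWord_mk_singleton_mul_of_head_ne fun h => (hA _ h).2 rfl, hA⟩

theorem ArtinHeadSpec.head?_mk_succ_false_mul (hg : ArtinHeadSpec p g)
    (hx : g.toWord.head? ≠ some (p + 1, true)) :
    ∀ c ∈ (artinAut p (mk [(p + 1, false)] * g)).toWord.head?,
      (c.1 = p ∨ c.1 = p + 1) ∧ c ≠ (p, true) := by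
  rw [_root_.map_mul, artinAut_mk_succ]
  by_cases hA : (artinAut p g).toWord.head? = some (p, true)
  · rcases hg.head?_of_eq_self hA with ⟨e, he⟩ | hsucc
    · obtain ⟨z, hz⟩ := hg.2.1 e he
      rw [toWord_mk_singleton_mul_of_toWord_eq hz]
      simp
    · exact absurd hsucc hx
  · rw [toWord_mk_singleton_mul_of_head_ne hA]
    simp

theorem ArtinHeadSpec.mk_mul (hg : ArtinHeadSpec p g) {x : ℕ × Bool}
    (hx : g.toWord.head? ≠ some (x.1, !x.2)) : ArtinHeadSpec p (mk [x] * g) := by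
  have hhead : (mk [x] * g).toWord.head? = some x := by
    rw [toWord_mk_singleton_mul_of_head_ne hx]; rfl
  refine ⟨fun y h h' hy => ?_, fun e he => ?_, fun he => ?_, fun he => ?_⟩ <;>
    rw [hhead, Option.some.injEq] at * <;> subst_vars
  · exact hg.head?_mk_mul_of_ne h h' hx
  · exact hg.toWord_mk_self_mul _ hx
  · exact hg.toWord_mk_succ_true_mul hx
  · exact hg.head?_mk_succ_false_mul hx

theorem artinHeadSpec (p : ℕ) (g : FreeGroup ℕ) : ArtinHeadSpec p g :=
  induction_on_toWord (by simp [ArtinHeadSpec]) (fun _ _ hx hg => hg.mk_mul hx) g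

end ArtinHead

theorem artinAut_relations (n : ℕ) :
    ∀ r ∈ braidRels (n - 1), lift (fun i : Fin (n - 1) => artinAut (i + 1)) r = 1 := by
  rintro r ⟨i, j, ⟨hij, rfl⟩ | ⟨hij, rfl⟩⟩ <;>
    simp only [_root_.map_mul, _root_.map_inv, lift_apply_of]
  · rw [artinAut_comm (by omega)]
    group
  · rw [show (j : ℕ) + 1 = i + 1 + 1 by omega, artinAut_braid]
    group

def artinAction (n : ℕ) : B n →* MulAut (FreeGroup ℕ) :=
  PresentedGroup.toGroup (artinAut_relations n)

theorem artinAction_gen {n i : ℕ} (h : 1 ≤ i) (h' : i ≤ n - 1) :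
    artinAction n (gen n i) = artinAut i := by
  rw [gen, dif_pos (by omega), artinAction, PresentedGroup.toGroup.of]
  congr 1
  simp only
  omega

theorem artinAction_apply_of_of_mem_Bsub {n k j : ℕ} {β : B n} (hβ : β ∈ Bsub n k)
    (hj : k < j) : artinAction n β (of j) = of j := by
  induction hβ using Subgroup.closure_induction with
  | mem x hx =>
    obtain ⟨i, hi, hik, rfl⟩ := hx
    by_cases hin : i ≤ n - 1
    · rw [artinAction_gen hi hin, artinAut_of_of_ne (by omega) (by omega)]
    · rw [gen, dif_neg (by omega), _root_.map_one, MulAut.one_apply]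
  | one => rw [_root_.map_one, MulAut.one_apply]
  | mul x y _ _ hx hy => rw [_root_.map_mul, MulAut.mul_apply, hy, hx]
  | inv x _ hx => rw [_root_.map_inv, MulAut.inv_apply, MulEquiv.symm_apply_eq, hx]

theorem evalWord_cons (n k : ℕ) (b : Bool) (w : List (ℕ × Bool)) :
    evalWord n ((k, b) :: w) = (if b then gen n k else (gen n k)⁻¹) * evalWord n w := by
  rw [evalWord, evalWord, List.map_cons, List.prod_cons]

theorem evalWord_append (n : ℕ) (w w' : List (ℕ × Bool)) :
    evalWord n (w ++ w') = evalWord n w * evalWord n w' := by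
  rw [evalWord, evalWord, evalWord, List.map_append, List.prod_append]

theorem gen_mem_Bsub {n k i : ℕ} (h : 1 ≤ i) (h' : i + 1 ≤ k) : gen n i ∈ Bsub n k :=
  Subgroup.subset_closure ⟨i, h, h', rfl⟩

theorem evalWord_mem_Bsub {n k : ℕ} {w : List (ℕ × Bool)}
    (hw : ∀ x ∈ w, 1 ≤ x.1 ∧ x.1 + 1 ≤ k) : evalWord n w ∈ Bsub n k := by
  refine list_prod_mem fun y hy => ?_
  obtain ⟨x, hx, rfl⟩ := List.mem_map.mp hy
  have hgen := gen_mem_Bsub (n := n) (hw x hx).1 (hw x hx).2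
  split_ifs
  exacts [hgen, inv_mem hgen]

theorem delta_mem_Bsub (n k : ℕ) : delta n k ∈ Bsub n k := by
  refine list_prod_mem fun x hx => ?_
  obtain ⟨j, hj, rfl⟩ := List.mem_map.mp hx
  rw [List.mem_reverse, List.mem_range] at hj
  refine list_prod_mem fun y hy => ?_
  obtain ⟨i, hi, rfl⟩ := List.mem_map.mp hy
  rw [List.mem_range'_1] at hi
  exact gen_mem_Bsub hi.1 (by omega)

theorem SigmaPos.append {i : ℕ} {w w' : List (ℕ × Bool)} (hw : SigmaPos i w)
    (hw' : SigmaPos i w') : SigmaPos i (w ++ w') := by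
  refine ⟨List.mem_append_left _ hw.1, ?_, fun x hx => ?_⟩
  · rw [List.mem_append, not_or]
    exact ⟨hw.2.1, hw'.2.1⟩
  · rcases List.mem_append.mp hx with hx | hx
    exacts [hw.2.2 x hx, hw'.2.2 x hx]

theorem head?_artinAction_evalWord_ne {n i : ℕ} (hi : i < n) {w : List (ℕ × Bool)}
    (hw : SigmaPos i w) :
    (artinAction n (evalWord n w) (of (i + 1))⁻¹).toWord.head? ≠ some (i + 1, false) := by
  induction w with
  | nil => exact absurd hw.1 List.not_mem_nil
  | cons x w ih =>
    obtain ⟨hpos, hneg, hbound⟩ := hw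
    obtain ⟨k, b⟩ := x
    obtain ⟨hk, hki⟩ := hbound _ List.mem_cons_self
    have hgen : artinAction n (gen n k) = artinAut k := artinAction_gen hk (by omega)
    rw [evalWord_cons, _root_.map_mul, MulAut.mul_apply]
    by_cases hw : (i, true) ∈ w
    · specialize ih ⟨hw, fun h => hneg (List.mem_cons_of_mem _ h),
        fun x hx => hbound x (List.mem_cons_of_mem _ hx)⟩
      set g := artinAction n (evalWord n w) (of (i + 1))⁻¹
      have hspec := artinHeadSpec k
      rcases lt_or_eq_of_le hki with hlt | rfl
      · have h1 : (i + 1, false).1 ≠ k := by simp only; omega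
        have h2 : (i + 1, false).1 ≠ k + 1 := by simp only; omega
        cases b
        · rwa [if_neg Bool.false_ne_true, _root_.map_inv, hgen, ne_eq,
            ← (hspec _).head?_eq_iff h1 h2, MulAut.apply_inv_self]
        · rwa [if_pos rfl, hgen, ne_eq, (hspec _).head?_eq_iff h1 h2]
      · cases b
        · exact absurd List.mem_cons_self hneg
        rw [if_pos rfl, hgen]
        exact fun h => ih ((hspec g).head?_eq_succ_false h)
    · obtain ⟨rfl, rfl⟩ : i = k ∧ true = b := by simpa [hw] using hpos
      have hmem : evalWord n w ∈ Bsub n i := evalWord_mem_Bsub fun x hx => by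
        obtain ⟨hx1, hx2⟩ := hbound x (List.mem_cons_of_mem _ hx)
        refine ⟨hx1, Nat.succ_le_of_lt (lt_of_le_of_ne hx2 fun h => ?_)⟩
        obtain ⟨j, _ | _⟩ := x
        · exact hneg (List.mem_cons_of_mem _ (h ▸ hx))
        · exact hw (h ▸ hx)
      rw [if_pos rfl, hgen, _root_.map_inv,
        artinAction_apply_of_of_mem_Bsub hmem (Nat.lt_succ_self i), _root_.map_inv,
        artinAut_of_succ, toWord_inv, toWord_of]
      simp [invRev]

theorem evalWord_not_mem_Bsub_of_sigmaPos {n i : ℕ} (hi : i < n) {w : List (ℕ × Bool)}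
    (hw : SigmaPos i w) : evalWord n w ∉ Bsub n i := fun hmem => by
  apply head?_artinAction_evalWord_ne hi hw
  rw [_root_.map_inv, artinAction_apply_of_of_mem_Bsub hmem (Nat.lt_succ_self i), toWord_inv,
    toWord_of]
  rfl

theorem mem_Bsub_or_sigmaPos_of_dle {n : ℕ} {β γ : B n} (h : dle n β γ) :
    β⁻¹ * γ ∈ Bsub n (n - 1) ∨ ∃ w, SigmaPos (n - 1) w ∧ evalWord n w = β⁻¹ * γ := by
  rcases h with ⟨i, w, hi, hw, hev⟩ | rfl
  · rcases lt_or_eq_of_le (show i ≤ n - 1 by omega) with hlt | rfl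
    · refine Or.inl (hev ▸ evalWord_mem_Bsub fun x hx => ?_)
      have := hw.2.2 x hx
      omega
    · exact Or.inr ⟨w, hw, hev⟩
  · rw [inv_mul_cancel]
    exact Or.inl (one_mem _)

theorem quotient_mem_subgroup_of_between_general (n d : ℕ) (β : B n)
    (h1 : dle n (delta n n ^ d * (delta n (n - 1) ^ d)⁻¹) β)
    (h2 : dle n β (delta n n ^ d)) :
    (delta n n ^ d)⁻¹ * β ∈ Bsub n (n - 1) := by
  have hE : delta n (n - 1) ^ d ∈ Bsub n (n - 1) := pow_mem (delta_mem_Bsub n (n - 1)) d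
  rcases mem_Bsub_or_sigmaPos_of_dle h2 with h2 | ⟨w, hw, hev⟩
  · simpa using inv_mem h2
  rcases mem_Bsub_or_sigmaPos_of_dle h1 with h1 | ⟨w', hw', hev'⟩
  · convert mul_mem (inv_mem hE) h1 using 1
    group
  · have hn : n - 1 < n := by
      have := (hw.2.2 _ hw.1).1
      omega
    refine absurd ?_ (evalWord_not_mem_Bsub_of_sigmaPos hn (hw'.append hw))
    rw [evalWord_append, hev', hev]
    convert hE using 1
    group

/-- If `β ∈ B⁺_n` satisfies `Δ̂_{n-1,d} ≤ β ≤ Δ_n^d` in the Dehornoy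
ordering, then `Δ_n^{-d} β` lies in the subgroup `B_{n-1}` of `B_n`. -/
theorem quotient_mem_subgroup_of_between (n d : ℕ) (hn : 3 ≤ n) (β : B n)
    (hβ : β ∈ Bplus n n)
    (h1 : dle n (delta n n ^ d * (delta n (n - 1) ^ d)⁻¹) β)
    (h2 : dle n β (delta n n ^ d)) :
    (delta n n ^ d)⁻¹ * β ∈ Bsub n (n - 1) :=
  quotient_mem_subgroup_of_between_general n d β h1 h2

end Braid
end
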